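/- arXiv:1310.1844 — 6 statements merged into one kernel-verified Lean document; each statement's English description precedes it below -/
import Mathlib

section
/- In the binary i.i.d. model with the two-threshold SPRT defined in the context, as T → ∞ one has N_0 / log T → c / D(p_0‖p_1) almost surely under ℙ_0, and N_1 / log T → 1 / D(p_1‖p_0) almost surely under ℙ_1. -/
/-!
Under `p` the log-likelihood ratio `S n = ∑ k < n, log (p (Y k) / q (Y k))` is a random walk
with drift `D(p‖q) > 0` (strict Gibbs inequality), so `S n / n → D(p‖q)` almost surely by the
strong law of large numbers. The stopping rule `T ^ c * ∏ q ≤ ∏ p` is the first passage of `S`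
above `c * log T`, and a sequence growing linearly at rate `D` first exceeds level `L` after
`L / D + o(L)` steps because `S (N - 1) < L ≤ S N`. The second claim is the first one with `p`,
`q` swapped and `c = 1`.
-/

open MeasureTheory ProbabilityTheory InformationTheory Filter Topology
open scoped ENNReal

-- `sInf ∅ = 0`: this is the first passage time only once the level is known to be reached.
noncomputable def firstPassage (S : ℕ → ℝ) (L : ℝ) : ℕ := sInf {m | 1 ≤ m ∧ L ≤ S m}

section FirstPassage

variable {S : ℕ → ℝ} {D L : ℝ}

lemma tendsto_atTop_of_tendsto_div_natCast (hD : 0 < D)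
    (hS : Tendsto (fun n ↦ S n / n) atTop (𝓝 D)) : Tendsto S atTop atTop := by
  refine (hS.pos_mul_atTop hD tendsto_natCast_atTop_atTop).congr' ?_
  filter_upwards [eventually_ne_atTop 0] with n hn
  field_simp

lemma firstPassage_spec (hS : Tendsto S atTop atTop) (L : ℝ) :
    1 ≤ firstPassage S L ∧ L ≤ S (firstPassage S L) := by
  obtain ⟨n, hn⟩ := (hS.eventually_ge_atTop L).exists_forall_of_atTop
  exact Nat.sInf_mem (s := {m | 1 ≤ m ∧ L ≤ S m})
    ⟨max 1 n, le_max_left _ _, hn _ (le_max_right _ _)⟩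

lemma lt_of_lt_firstPassage {m : ℕ} (hm : 1 ≤ m) (h : m < firstPassage S L) : S m < L :=
  not_le.1 fun hL ↦ Nat.notMem_of_lt_sInf h ⟨hm, hL⟩

lemma tendsto_firstPassage_atTop (hS : Tendsto S atTop atTop) :
    Tendsto (firstPassage S) atTop atTop := by
  refine tendsto_atTop.2 fun M ↦ ?_
  obtain ⟨C, hC⟩ := ((Set.finite_Iio M).image S).bddAbove
  filter_upwards [eventually_gt_atTop C] with L hL
  by_contra! h
  exact (hC ⟨_, h, rfl⟩).not_gt (hL.trans_le (firstPassage_spec hS L).2)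

lemma tendsto_div_natCast_succ (hS : Tendsto (fun n ↦ S n / n) atTop (𝓝 D)) :
    Tendsto (fun n : ℕ ↦ S n / (n + 1 : ℝ)) atTop (𝓝 D) := by
  have := hS.mul (tendsto_natCast_div_add_atTop (1 : ℝ))
  rw [mul_one] at this
  refine this.congr' ?_
  filter_upwards [eventually_ne_atTop 0] with n hn
  field_simp

theorem tendsto_firstPassage_div (hD : 0 < D)
    (hS : Tendsto (fun n ↦ S n / n) atTop (𝓝 D)) :
    Tendsto (fun L ↦ (firstPassage S L : ℝ) / L) atTop (𝓝 D⁻¹) := by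
  have hS_atTop := tendsto_atTop_of_tendsto_div_natCast hD hS
  have hN := tendsto_firstPassage_atTop hS_atTop
  have hupper : Tendsto (fun L ↦ S (firstPassage S L) / firstPassage S L) atTop (𝓝 D) :=
    hS.comp hN
  have hlower : Tendsto (fun L ↦ S (firstPassage S L - 1) / firstPassage S L) atTop (𝓝 D) := by
    refine ((tendsto_div_natCast_succ hS).comp ((tendsto_sub_atTop_nat 1).comp hN)).congr' ?_
    filter_upwards [hN.eventually_ge_atTop 1] with L hL
    simp [Nat.cast_sub hL]
  have hquot : Tendsto (fun L ↦ L / firstPassage S L) atTop (𝓝 D) := by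
    refine tendsto_of_tendsto_of_tendsto_of_le_of_le' hlower hupper ?_ ?_
    · filter_upwards [hN.eventually_ge_atTop 2] with L hL
      exact div_le_div_of_nonneg_right
        (lt_of_lt_firstPassage (by omega) (by omega)).le (Nat.cast_nonneg _)
    · exact .of_forall fun L ↦
        div_le_div_of_nonneg_right (firstPassage_spec hS_atTop L).2 (Nat.cast_nonneg _)
  simpa only [inv_div] using hquot.inv₀ hD.ne'

lemma tendsto_firstPassage_const_mul_log_div_log {c : ℝ} (hc : 0 < c) (hD : 0 < D)
    (hS : Tendsto (fun n ↦ S n / n) atTop (𝓝 D)) :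
    Tendsto (fun T ↦ (firstPassage S (c * Real.log T) : ℝ) / Real.log T) atTop (𝓝 (c / D)) := by
  have h := ((tendsto_firstPassage_div hD hS).comp
    (Real.tendsto_log_atTop.const_mul_atTop hc)).const_mul c
  rw [← div_eq_mul_inv] at h
  refine h.congr' ?_
  filter_upwards [eventually_gt_atTop 1] with T hT
  have := Real.log_pos hT
  simp only [Function.comp_apply]
  field_simp

end FirstPassage

lemma mul_klFun_div {p q : ℝ} (hq : q ≠ 0) :
    q * klFun (p / q) = p * Real.log (p / q) + q - p := by
  rw [klFun_apply]
  field_simp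

lemma sum_mul_log_div_eq_sum_mul_klFun {Obs : Type*} [Fintype Obs] {p q : Obs → ℝ}
    (hp_sum : ∑ y, p y = 1) (hq_sum : ∑ y, q y = 1) (hsupp : ∀ y, p y = 0 ↔ q y = 0) :
    ∑ y, p y * Real.log (p y / q y) = ∑ y, q y * klFun (p y / q y) := by
  have hterm : ∀ y, q y * klFun (p y / q y) = p y * Real.log (p y / q y) + q y - p y := by
    intro y
    by_cases hq : q y = 0
    · simp [hq, (hsupp y).2 hq]
    · exact mul_klFun_div hq
  simp only [hterm, Finset.sum_sub_distrib, Finset.sum_add_distrib, hp_sum, hq_sum]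
  ring

theorem sum_mul_log_div_pos {Obs : Type*} [Fintype Obs] {p q : Obs → ℝ}
    (hp_nonneg : ∀ y, 0 ≤ p y) (hq_nonneg : ∀ y, 0 ≤ q y)
    (hp_sum : ∑ y, p y = 1) (hq_sum : ∑ y, q y = 1)
    (hne : p ≠ q) (hsupp : ∀ y, p y = 0 ↔ q y = 0) :
    0 < ∑ y, p y * Real.log (p y / q y) := by
  rw [sum_mul_log_div_eq_sum_mul_klFun hp_sum hq_sum hsupp]
  have hratio : ∀ y, 0 ≤ p y / q y := fun y ↦ div_nonneg (hp_nonneg y) (hq_nonneg y)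
  obtain ⟨y, hy⟩ : ∃ y, p y ≠ q y := Function.ne_iff.1 hne
  have hq : q y ≠ 0 := fun h ↦ hy (((hsupp y).2 h).trans h.symm)
  refine Finset.sum_pos' (fun y _ ↦ mul_nonneg (hq_nonneg y) (klFun_nonneg (hratio y)))
    ⟨y, Finset.mem_univ y, mul_pos ((hq_nonneg y).lt_of_ne' hq) ?_⟩
  exact (klFun_nonneg (hratio y)).lt_of_ne' fun h ↦
    hy ((div_eq_one_iff_eq hq).1 ((klFun_eq_zero_iff (hratio y)).1 h))

lemma nonempty_of_sum_eq_one {α : Type*} [Fintype α] {p : α → ℝ} (hp_sum : ∑ y, p y = 1) :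
    Nonempty α :=
  Finset.univ_nonempty_iff.1 (Finset.nonempty_of_sum_ne_zero (hp_sum ▸ one_ne_zero))

section IIDLaw

variable {Obs Ω : Type*} [MeasurableSpace Ω]

def HasIIDLaw (μ : Measure Ω) (Y : ℕ → Ω → Obs) (p : Obs → ℝ) : Prop :=
  ∀ (n : ℕ) (ys : ℕ → Obs),
    μ {ω | ∀ k < n, Y k ω = ys k} = ∏ k ∈ Finset.range n, ENNReal.ofReal (p (ys k))

variable {μ : Measure Ω} {p : Obs → ℝ} {Y : ℕ → Ω → Obs} [Nonempty Obs]

lemma HasIIDLaw.measure_preimage_fin_singleton (hY : HasIIDLaw μ Y p) {n : ℕ} (v : Fin n → Obs) :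
    μ ((fun ω (i : Fin n) ↦ Y i ω) ⁻¹' {v}) = ∏ i, ENNReal.ofReal (p (v i)) := by
  let ys : ℕ → Obs := fun k ↦ if h : k < n then v ⟨k, h⟩ else Classical.arbitrary Obs
  have hset : (fun ω (i : Fin n) ↦ Y i ω) ⁻¹' {v} = {ω | ∀ k < n, Y k ω = ys k} := by
    ext ω
    simp only [Set.mem_preimage, Set.mem_singleton_iff, funext_iff, Set.mem_ofPred_eq, ys]
    exact ⟨fun h k hk ↦ by simp [hk, ← h], fun h i ↦ by simpa using h i i.2⟩
  rw [hset, hY, ← Fin.prod_univ_eq_prod_range]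
  simp [ys]

lemma HasIIDLaw.isProbabilityMeasure (hY : HasIIDLaw μ Y p) : IsProbabilityMeasure μ :=
  ⟨by simpa using hY 0 fun _ ↦ Classical.arbitrary Obs⟩

variable [MeasurableSpace Obs] [MeasurableSingletonClass Obs]

lemma HasIIDLaw.measure_forall_lt_mem (hY : HasIIDLaw μ Y p)
    (hYmeas : ∀ k, Measurable (Y k)) (n : ℕ) (B : ℕ → Finset Obs) :
    μ {ω | ∀ k < n, Y k ω ∈ B k} = ∏ k ∈ Finset.range n, ∑ y ∈ B k, ENNReal.ofReal (p y) := by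
  have hF : Measurable fun ω (i : Fin n) ↦ Y i ω := measurable_pi_lambda _ fun i ↦ hYmeas i
  have hset : {ω | ∀ k < n, Y k ω ∈ B k}
      = (fun ω (i : Fin n) ↦ Y i ω) ⁻¹' ↑(Fintype.piFinset fun i : Fin n ↦ B i) := by
    ext ω
    simp [Fin.forall_iff]
  rw [hset, ← sum_measure_preimage_singleton _ fun v _ ↦ hF (measurableSet_singleton v),
    ← Fin.prod_univ_eq_prod_range (fun k ↦ ∑ y ∈ B k, ENNReal.ofReal (p y)),
    Finset.prod_univ_sum]
  exact Finset.sum_congr rfl fun v _ ↦ hY.measure_preimage_fin_singleton v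

variable [Fintype Obs]

lemma HasIIDLaw.sum_ofReal_eq_one (hY : HasIIDLaw μ Y p) (hYmeas : ∀ k, Measurable (Y k)) :
    ∑ y, ENNReal.ofReal (p y) = 1 := by
  have := hY.isProbabilityMeasure
  simpa using (hY.measure_forall_lt_mem hYmeas 1 fun _ ↦ Finset.univ).symm

lemma HasIIDLaw.measure_biInter_preimage (hY : HasIIDLaw μ Y p)
    (hYmeas : ∀ k, Measurable (Y k)) (S : Finset ℕ) (B : ℕ → Finset Obs) :
    μ (⋂ i ∈ S, Y i ⁻¹' B i) = ∏ i ∈ S, ∑ y ∈ B i, ENNReal.ofReal (p y) := by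
  classical
  set n := S.sup id + 1
  have hSn : S ⊆ Finset.range n := fun i hi ↦
    Finset.mem_range.2 (Nat.lt_succ_of_le (Finset.le_sup (f := id) hi))
  let B' : ℕ → Finset Obs := fun k ↦ if k ∈ S then B k else Finset.univ
  have hset : ⋂ i ∈ S, Y i ⁻¹' B i = {ω | ∀ k < n, Y k ω ∈ B' k} := by
    ext ω
    simp only [Set.mem_iInter, Set.mem_preimage, Finset.mem_coe, Set.mem_ofPred_eq, B']
    refine ⟨fun h k _ ↦ ?_, fun h i hi ↦ by simpa [hi] using h i (Finset.mem_range.1 (hSn hi))⟩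
    split_ifs with hk
    · exact h k hk
    · exact Finset.mem_univ _
  rw [hset, hY.measure_forall_lt_mem hYmeas, ← Finset.prod_subset hSn]
  · exact Finset.prod_congr rfl fun i hi ↦ by simp [B', hi]
  · intro k _ hk
    simp [B', hk, hY.sum_ofReal_eq_one hYmeas]

lemma HasIIDLaw.measure_preimage (hY : HasIIDLaw μ Y p)
    (hYmeas : ∀ k, Measurable (Y k)) (k : ℕ) (B : Finset Obs) :
    μ (Y k ⁻¹' B) = ∑ y ∈ B, ENNReal.ofReal (p y) := by
  simpa using hY.measure_biInter_preimage hYmeas {k} fun _ ↦ B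

lemma HasIIDLaw.iIndepFun (hY : HasIIDLaw μ Y p) (hYmeas : ∀ k, Measurable (Y k)) :
    iIndepFun Y μ := by
  classical
  refine iIndepFun_iff_measure_inter_preimage_eq_mul.2 fun S t _ ↦ ?_
  have hmarg : ∀ i, μ (Y i ⁻¹' t i) = ∑ y ∈ (t i).toFinset, ENNReal.ofReal (p y) := fun i ↦ by
    simpa using hY.measure_preimage hYmeas i (t i).toFinset
  simpa [hmarg] using hY.measure_biInter_preimage hYmeas S fun i ↦ (t i).toFinset

lemma HasIIDLaw.identDistrib (hY : HasIIDLaw μ Y p) (hYmeas : ∀ k, Measurable (Y k)) (k : ℕ) :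
    IdentDistrib (Y k) (Y 0) μ μ := by
  classical
  refine ⟨(hYmeas k).aemeasurable, (hYmeas 0).aemeasurable, Measure.ext fun s hs ↦ ?_⟩
  rw [Measure.map_apply (hYmeas k) hs, Measure.map_apply (hYmeas 0) hs, ← Set.coe_toFinset s,
    hY.measure_preimage hYmeas, hY.measure_preimage hYmeas]

lemma HasIIDLaw.ae_forall_pos (hY : HasIIDLaw μ Y p) (hYmeas : ∀ k, Measurable (Y k)) :
    ∀ᵐ ω ∂μ, ∀ k, 0 < p (Y k ω) := by
  classical
  refine ae_all_iff.2 fun k ↦ ae_iff.2 ?_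
  have hset : {ω | ¬ 0 < p (Y k ω)} = Y k ⁻¹' ↑(Finset.univ.filter fun y ↦ p y ≤ 0) := by
    ext ω
    simp
  rw [hset, hY.measure_preimage hYmeas]
  exact Finset.sum_eq_zero fun y hy ↦ ENNReal.ofReal_eq_zero.2 (Finset.mem_filter.1 hy).2

lemma HasIIDLaw.integral_comp (hY : HasIIDLaw μ Y p) (hYmeas : ∀ k, Measurable (Y k))
    (hp_nonneg : ∀ y, 0 ≤ p y) (f : Obs → ℝ) : ∫ ω, f (Y 0 ω) ∂μ = ∑ y, p y * f y := by
  have := hY.isProbabilityMeasure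
  rw [← integral_map (hYmeas 0).aemeasurable (measurable_of_countable f).aestronglyMeasurable,
    integral_fintype .of_finite]
  refine Finset.sum_congr rfl fun y _ ↦ ?_
  rw [Measure.real, Measure.map_apply (hYmeas 0) (measurableSet_singleton y), smul_eq_mul,
    ← Finset.coe_singleton, hY.measure_preimage hYmeas, Finset.sum_singleton,
    ENNReal.toReal_ofReal (hp_nonneg y)]

lemma HasIIDLaw.ae_tendsto_sum_div (hY : HasIIDLaw μ Y p) (hYmeas : ∀ k, Measurable (Y k))
    (hp_nonneg : ∀ y, 0 ≤ p y) (f : Obs → ℝ) :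
    ∀ᵐ ω ∂μ, Tendsto (fun n : ℕ ↦ (∑ i ∈ Finset.range n, f (Y i ω)) / n) atTop
      (𝓝 (∑ y, p y * f y)) := by
  have := hY.isProbabilityMeasure
  have hf : Measurable f := measurable_of_countable f
  rw [← hY.integral_comp hYmeas hp_nonneg f]
  exact strong_law_ae_real (fun i ω ↦ f (Y i ω)) (Integrable.of_finite.comp_measurable (hYmeas 0))
    (fun i j hij ↦ ((hY.iIndepFun hYmeas).indepFun hij).comp hf hf)
    (fun i ↦ (hY.identDistrib hYmeas i).comp hf)

end IIDLaw

lemma mul_prod_le_prod_iff_log_le_sum {ι : Type*} (s : Finset ι) {a b : ι → ℝ}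
    (ha : ∀ i ∈ s, 0 < a i) (hb : ∀ i ∈ s, 0 < b i) {x : ℝ} (hx : 0 < x) :
    x * ∏ i ∈ s, b i ≤ ∏ i ∈ s, a i ↔ Real.log x ≤ ∑ i ∈ s, Real.log (a i / b i) := by
  have hab : ∀ i ∈ s, 0 < a i / b i := fun i hi ↦ div_pos (ha i hi) (hb i hi)
  rw [← le_div_iff₀ (Finset.prod_pos hb), ← Finset.prod_div_distrib,
    ← Real.log_le_log_iff hx (Finset.prod_pos hab), Real.log_prod fun i hi ↦ (hab i hi).ne']

lemma sInf_setOf_natCast {P : ℕ → Prop} (hP : ∃ m, P m) :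
    sInf {n : ℕ∞ | ∃ m : ℕ, (m : ℕ∞) = n ∧ P m} = ((sInf {m | P m} : ℕ) : ℕ∞) := by
  have hset : {n : ℕ∞ | ∃ m : ℕ, (m : ℕ∞) = n ∧ P m} = (Nat.cast : ℕ → ℕ∞) '' {m | P m} := by
    ext n
    simp [and_comm]
  rw [hset, sInf_image, ENat.natCast_sInf (s := {m | P m}) hP]

theorem ae_tendsto_stoppingTime_div_log {Obs Ω : Type*} [Fintype Obs]
    [MeasurableSpace Obs] [MeasurableSingletonClass Obs] [MeasurableSpace Ω] {μ : Measure Ω}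
    {p q : Obs → ℝ} {Y : ℕ → Ω → Obs}
    (hp_nonneg : ∀ y, 0 ≤ p y) (hq_nonneg : ∀ y, 0 ≤ q y)
    (hp_sum : ∑ y, p y = 1) (hq_sum : ∑ y, q y = 1)
    (hne : p ≠ q) (hsupp : ∀ y, p y = 0 ↔ q y = 0)
    (hY : HasIIDLaw μ Y p) (hYmeas : ∀ k, Measurable (Y k)) {c : ℝ} (hc : 0 < c) :
    ∀ᵐ ω ∂μ, Tendsto
      (fun T : ℝ ↦
        ((sInf {n : ℕ∞ | ∃ m : ℕ, (m : ℕ∞) = n ∧ 1 ≤ m ∧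
            T ^ c * ∏ k ∈ Finset.range m, q (Y k ω) ≤ ∏ k ∈ Finset.range m, p (Y k ω)} : ℕ∞)
          : ℝ≥0∞) / ENNReal.ofReal (Real.log T))
      atTop (𝓝 (ENNReal.ofReal (c / ∑ y, p y * Real.log (p y / q y)))) := by
  have := nonempty_of_sum_eq_one hp_sum
  have hD := sum_mul_log_div_pos hp_nonneg hq_nonneg hp_sum hq_sum hne hsupp
  filter_upwards [hY.ae_tendsto_sum_div hYmeas hp_nonneg fun y ↦ Real.log (p y / q y),
    hY.ae_forall_pos hYmeas] with ω hS hp_pos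
  set S : ℕ → ℝ := fun m ↦ ∑ k ∈ Finset.range m, Real.log (p (Y k ω) / q (Y k ω))
  have hq_pos : ∀ k, 0 < q (Y k ω) := fun k ↦
    (hq_nonneg _).lt_of_ne' fun h ↦ (hp_pos k).ne' ((hsupp _).2 h)
  have hstop : ∀ T : ℝ, 1 < T →
      sInf {n : ℕ∞ | ∃ m : ℕ, (m : ℕ∞) = n ∧ 1 ≤ m ∧
          T ^ c * ∏ k ∈ Finset.range m, q (Y k ω) ≤ ∏ k ∈ Finset.range m, p (Y k ω)}
        = (firstPassage S (c * Real.log T) : ℕ∞) := by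
    intro T hT
    have hT0 : 0 < T := one_pos.trans hT
    simp_rw [mul_prod_le_prod_iff_log_le_sum _ (fun k _ ↦ hp_pos k) (fun k _ ↦ hq_pos k)
      (Real.rpow_pos_of_pos hT0 c), Real.log_rpow hT0]
    exact sInf_setOf_natCast
      (Set.nonempty_of_mem (firstPassage_spec (tendsto_atTop_of_tendsto_div_natCast hD hS) _))
  have hreal := (ENNReal.continuous_ofReal.tendsto _).comp
    (tendsto_firstPassage_const_mul_log_div_log hc hD hS)
  refine hreal.congr' ?_
  filter_upwards [eventually_gt_atTop 1] with T hT
  rw [Function.comp_apply, hstop T hT, ENat.toENNReal_coe, ← ENNReal.ofReal_natCast,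
    ← ENNReal.ofReal_div_of_pos (Real.log_pos hT)]

theorem stmt_3_general {Obs : Type*} [Fintype Obs]
    [MeasurableSpace Obs] [MeasurableSingletonClass Obs]
    (p0 p1 : Obs → ℝ)
    (hp0_nonneg : ∀ y, 0 ≤ p0 y) (hp1_nonneg : ∀ y, 0 ≤ p1 y)
    (hp0_sum : ∑ y, p0 y = 1) (hp1_sum : ∑ y, p1 y = 1)
    (hne : p0 ≠ p1)
    (hsupp : ∀ y, p0 y = 0 ↔ p1 y = 0)
    (Ω : Type*) [MeasurableSpace Ω]
    (ℙ0 ℙ1 : Measure Ω)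
    (Y : ℕ → Ω → Obs) (hYmeas : ∀ k, Measurable (Y k))
    (hiid0 : ∀ (n : ℕ) (ys : ℕ → Obs),
      ℙ0 {ω | ∀ k < n, Y k ω = ys k}
        = ∏ k ∈ Finset.range n, ENNReal.ofReal (p0 (ys k)))
    (hiid1 : ∀ (n : ℕ) (ys : ℕ → Obs),
      ℙ1 {ω | ∀ k < n, Y k ω = ys k}
        = ∏ k ∈ Finset.range n, ENNReal.ofReal (p1 (ys k)))
    (c : ℝ) (hc : 0 < c) :
    (∀ᵐ ω ∂ℙ0, Filter.Tendsto
      (fun T : ℝ =>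
        ((sInf {n : ℕ∞ | ∃ m' : ℕ, (m' : ℕ∞) = n ∧ 1 ≤ m' ∧
            T ^ c * ∏ k ∈ Finset.range m', p1 (Y k ω)
              ≤ ∏ k ∈ Finset.range m', p0 (Y k ω)} : ℕ∞) : ℝ≥0∞)
          / ENNReal.ofReal (Real.log T))
      Filter.atTop
      (nhds (ENNReal.ofReal
        (c / ∑ y, p0 y * Real.log (p0 y / p1 y)))))
    ∧
    (∀ᵐ ω ∂ℙ1, Filter.Tendsto
      (fun T : ℝ =>
        ((sInf {n : ℕ∞ | ∃ m' : ℕ, (m' : ℕ∞) = n ∧ 1 ≤ m' ∧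
            T * ∏ k ∈ Finset.range m', p0 (Y k ω)
              ≤ ∏ k ∈ Finset.range m', p1 (Y k ω)} : ℕ∞) : ℝ≥0∞)
          / ENNReal.ofReal (Real.log T))
      Filter.atTop
      (nhds (ENNReal.ofReal
        (1 / ∑ y, p1 y * Real.log (p1 y / p0 y))))) := by
  refine ⟨ae_tendsto_stoppingTime_div_log hp0_nonneg hp1_nonneg hp0_sum hp1_sum hne hsupp
    hiid0 hYmeas hc, ?_⟩
  simpa only [Real.rpow_one] using ae_tendsto_stoppingTime_div_log hp1_nonneg hp0_nonneg
    hp1_sum hp0_sum hne.symm (fun y ↦ (hsupp y).symm) hiid1 hYmeas one_pos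

/-- **Almost-sure first-order asymptotics of the individual stopping times of
the two-threshold binary SPRT.**  `p0 ≠ p1` are pmfs on a finite set `Obs` with
mutually finite KL divergences (equal supports); under hypothesis `i ∈ {0,1}`
the observations are i.i.d. with pmf `p i`.  With `c > 0` and, for each
threshold `T`, `N0(T) = min{n ≥ 1 : p0(Y^n) ≥ T^c · p1(Y^n)}` and
`N1(T) = min{n ≥ 1 : p1(Y^n) ≥ T · p0(Y^n)}`, one has, as `T → ∞`,
`N0(T)/log T → c / D(p0‖p1)` a.s. under `ℙ0` and
`N1(T)/log T → 1 / D(p1‖p0)` a.s. under `ℙ1`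
(stated in `ℝ≥0∞`, so a nonstopping trajectory gives the value `∞`). -/
theorem stmt_3 {Obs : Type*} [Fintype Obs]
    [MeasurableSpace Obs] [MeasurableSingletonClass Obs]
    (p0 p1 : Obs → ℝ)
    (hp0_nonneg : ∀ y, 0 ≤ p0 y) (hp1_nonneg : ∀ y, 0 ≤ p1 y)
    (hp0_sum : ∑ y, p0 y = 1) (hp1_sum : ∑ y, p1 y = 1)
    (hne : p0 ≠ p1)
    (hsupp : ∀ y, p0 y = 0 ↔ p1 y = 0)
    (Ω : Type*) [MeasurableSpace Ω]
    (ℙ0 ℙ1 : Measure Ω)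
    (hprob0 : IsProbabilityMeasure ℙ0) (hprob1 : IsProbabilityMeasure ℙ1)
    (Y : ℕ → Ω → Obs) (hYmeas : ∀ k, Measurable (Y k))
    (hiid0 : ∀ (n : ℕ) (ys : ℕ → Obs),
      ℙ0 {ω | ∀ k < n, Y k ω = ys k}
        = ∏ k ∈ Finset.range n, ENNReal.ofReal (p0 (ys k)))
    (hiid1 : ∀ (n : ℕ) (ys : ℕ → Obs),
      ℙ1 {ω | ∀ k < n, Y k ω = ys k}
        = ∏ k ∈ Finset.range n, ENNReal.ofReal (p1 (ys k)))
    (c : ℝ) (hc : 0 < c) :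
    (∀ᵐ ω ∂ℙ0, Filter.Tendsto
      (fun T : ℝ =>
        ((sInf {n : ℕ∞ | ∃ m' : ℕ, (m' : ℕ∞) = n ∧ 1 ≤ m' ∧
            T ^ c * ∏ k ∈ Finset.range m', p1 (Y k ω)
              ≤ ∏ k ∈ Finset.range m', p0 (Y k ω)} : ℕ∞) : ℝ≥0∞)
          / ENNReal.ofReal (Real.log T))
      Filter.atTop
      (nhds (ENNReal.ofReal
        (c / ∑ y, p0 y * Real.log (p0 y / p1 y)))))
    ∧
    (∀ᵐ ω ∂ℙ1, Filter.Tendsto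
      (fun T : ℝ =>
        ((sInf {n : ℕ∞ | ∃ m' : ℕ, (m' : ℕ∞) = n ∧ 1 ≤ m' ∧
            T * ∏ k ∈ Finset.range m', p0 (Y k ω)
              ≤ ∏ k ∈ Finset.range m', p1 (Y k ω)} : ℕ∞) : ℝ≥0∞)
          / ENNReal.ofReal (Real.log T))
      Filter.atTop
      (nhds (ENNReal.ofReal
        (1 / ∑ y, p1 y * Real.log (p1 y / p0 y))))) :=
  stmt_3_general p0 p1 hp0_nonneg hp1_nonneg hp0_sum hp1_sum hne hsupp Ω ℙ0 ℙ1 Y hYmeas hiid0 hiid1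
    c hc
end

section
/- In the binary i.i.d. model with the two-threshold SPRT defined in the context, the stopping time N = min(N_0, N_1) satisfies limsup_{T→∞} 𝔼_0[N] / log T ≤ c / D(p_0‖p_1) and limsup_{T→∞} 𝔼_1[N] / log T ≤ 1 / D(p_1‖p_0). -/
/-!
Under `ℙ0`, the stopping time `N0` has not fired by time `j` exactly when the likelihood ratio
`Λ_j = p0(Y^j) / p1(Y^j)` is below `T^c`. Markov's inequality for `Λ_j^{-s}` bounds this
probability by `T^{cs} Z(s)^j`, where `Z(s) = ∑ p0^{1-s} p1^s` is the Chernoff coefficient.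
Summing the tail probabilities beyond `m ≈ c s log T / (1 - Z(s))` gives
`𝔼0[N] ≤ c s log T / (1 - Z(s)) + O(1)`, and `(1 - Z(s)) / s → D(p0‖p1)` as `s → 0⁺` because
`Z(0) = 1` and `Z'(0) = -D(p0‖p1)`. Under `ℙ1` the same argument applies with the hypotheses
exchanged and `c = 1`.
-/

open MeasureTheory Filter Topology
open scoped ENNReal

namespace Real

lemma sub_le_mul_log_div {a b : ℝ} (ha : 0 < a) (hb : 0 < b) : a - b ≤ a * log (a / b) := by
  have h := one_sub_inv_le_log_of_pos (div_pos ha hb)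
  rw [inv_div] at h
  calc a - b = a * (1 - b / a) := by field_simp
    _ ≤ a * log (a / b) := by gcongr

lemma sub_lt_mul_log_div {a b : ℝ} (ha : 0 < a) (hb : 0 < b) (hab : a ≠ b) :
    a - b < a * log (a / b) := by
  have h := log_lt_sub_one_of_pos (div_pos hb ha) (by rwa [Ne, div_eq_one_iff_eq ha.ne', eq_comm])
  have hlog : log (a / b) = -log (b / a) := by rw [← log_inv, inv_div]
  calc a - b = a * (1 - b / a) := by field_simp
    _ < a * log (a / b) := by gcongr; linarith

lemma le_rpow_mul_rpow_mul_rpow_of_le_mul {a b t s : ℝ} (ha : 0 ≤ a) (hb : 0 ≤ b) (ht : 0 ≤ t)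
    (hs : 0 ≤ s) (hab : a ≤ t * b) : a ≤ t ^ s * (a ^ (1 - s) * b ^ s) := by
  rcases ha.eq_or_lt with rfl | ha
  · positivity
  calc a = a ^ (1 - s) * a ^ s := by rw [← rpow_add ha]; simp
    _ ≤ a ^ (1 - s) * (t * b) ^ s := by gcongr
    _ = t ^ s * (a ^ (1 - s) * b ^ s) := by rw [mul_rpow ht hb]; ring

lemma rpow_mul_pow_le_one {T a Z : ℝ} {m : ℕ} (hT : 0 < T) (hZ0 : 0 ≤ Z) (hZ1 : Z < 1)
    (hm : a / (1 - Z) * log T ≤ m) : T ^ a * Z ^ m ≤ 1 := by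
  have hexp : a * log T ≤ m * (1 - Z) := by
    rwa [div_mul_eq_mul_div, div_le_iff₀ (by linarith)] at hm
  calc T ^ a * Z ^ m ≤ exp (log T * a) * exp (Z - 1) ^ m := by
        rw [rpow_def_of_pos hT]
        gcongr
        linarith [add_one_le_exp (Z - 1)]
    _ = exp (a * log T - m * (1 - Z)) := by rw [← exp_nat_mul, ← exp_add]; ring_nf
    _ ≤ 1 := exp_le_one_iff.mpr (by linarith)

end Real

section Divergence

variable {Obs : Type*} [Fintype Obs] {p0 p1 : Obs → ℝ}

lemma sum_mul_log_div_pos_s4 (hp0 : ∀ y, 0 ≤ p0 y) (hp1 : ∀ y, 0 ≤ p1 y)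
    (hp0_sum : ∑ y, p0 y = 1) (hp1_sum : ∑ y, p1 y = 1) (hne : p0 ≠ p1)
    (hsupp : ∀ y, p0 y = 0 ↔ p1 y = 0) :
    0 < ∑ y, p0 y * Real.log (p0 y / p1 y) := by
  have hpos : ∀ y, p0 y ≠ 0 → 0 < p0 y ∧ 0 < p1 y := fun y hy =>
    ⟨(hp0 y).lt_of_ne' hy, (hp1 y).lt_of_ne' fun h => hy ((hsupp y).mpr h)⟩
  obtain ⟨y0, hy0⟩ := Function.ne_iff.mp hne
  have hy0' : p0 y0 ≠ 0 := fun h => hy0 (h.trans ((hsupp y0).mp h).symm)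
  calc (0 : ℝ) = ∑ y, (p0 y - p1 y) := by rw [Finset.sum_sub_distrib, hp0_sum, hp1_sum, sub_self]
    _ < ∑ y, p0 y * Real.log (p0 y / p1 y) := by
      refine Finset.sum_lt_sum (fun y _ => ?_) ⟨y0, Finset.mem_univ _,
        Real.sub_lt_mul_log_div (hpos y0 hy0').1 (hpos y0 hy0').2 hy0⟩
      by_cases hy : p0 y = 0
      · simp [hy, (hsupp y).mp hy]
      · exact Real.sub_le_mul_log_div (hpos y hy).1 (hpos y hy).2

noncomputable def chernoffCoeff (p0 p1 : Obs → ℝ) (s : ℝ) : ℝ := ∑ y, p0 y ^ (1 - s) * p1 y ^ s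

lemma chernoffCoeff_nonneg (hp0 : ∀ y, 0 ≤ p0 y) (hp1 : ∀ y, 0 ≤ p1 y) (s : ℝ) :
    0 ≤ chernoffCoeff p0 p1 s :=
  Finset.sum_nonneg fun y _ => by have := hp0 y; have := hp1 y; positivity

lemma chernoffCoeff_zero (hp0_sum : ∑ y, p0 y = 1) : chernoffCoeff p0 p1 0 = 1 := by
  simp [chernoffCoeff, hp0_sum]

lemma hasDerivAt_chernoffCoeff_zero (hp0 : ∀ y, 0 ≤ p0 y) (hp1 : ∀ y, 0 ≤ p1 y)
    (hsupp : ∀ y, p0 y = 0 ↔ p1 y = 0) :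
    HasDerivAt (chernoffCoeff p0 p1) (-∑ y, p0 y * Real.log (p0 y / p1 y)) 0 := by
  rw [← Finset.sum_neg_distrib]
  refine HasDerivAt.fun_sum fun y _ => ?_
  by_cases hy : p0 y = 0
  -- One of the exponents `1 - s`, `s` is nonzero, so a term with `p0 y = p1 y = 0` vanishes.
  · have hzero : (fun s : ℝ => p0 y ^ (1 - s) * p1 y ^ s) = fun _ => 0 := by
      funext s
      rw [hy, (hsupp y).mp hy]
      rcases eq_or_ne s 0 with rfl | hs <;> simp [*]
    rw [hzero, hy, zero_mul, neg_zero]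
    exact hasDerivAt_const _ _
  have h0 : 0 < p0 y := (hp0 y).lt_of_ne' hy
  have h1 : 0 < p1 y := (hp1 y).lt_of_ne' fun h => hy ((hsupp y).mpr h)
  refine ((((hasDerivAt_id' (0 : ℝ)).const_sub 1).const_rpow h0).fun_mul
    ((hasDerivAt_id' (0 : ℝ)).const_rpow h1)).congr_deriv ?_
  simp only [sub_zero, Real.rpow_one, Real.rpow_zero, Real.log_div h0.ne' h1.ne']
  ring

lemma tendsto_one_sub_chernoffCoeff_div (hp0 : ∀ y, 0 ≤ p0 y) (hp1 : ∀ y, 0 ≤ p1 y)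
    (hp0_sum : ∑ y, p0 y = 1) (hsupp : ∀ y, p0 y = 0 ↔ p1 y = 0) :
    Tendsto (fun s => (1 - chernoffCoeff p0 p1 s) / s) (𝓝[>] 0)
      (𝓝 (∑ y, p0 y * Real.log (p0 y / p1 y))) := by
  have h := (hasDerivAt_iff_tendsto_slope.mp (hasDerivAt_chernoffCoeff_zero hp0 hp1 hsupp)).neg
  rw [neg_neg] at h
  refine (h.mono_left (nhdsWithin_mono _ fun s hs => ne_of_gt hs)).congr fun s => ?_
  rw [slope_def_field, chernoffCoeff_zero hp0_sum, sub_zero, ← neg_div, neg_sub]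

end Divergence

lemma ENat.toENNReal_le_add_tsum {x : ℕ∞} {m : ℕ} {g : ℕ → ℝ≥0∞}
    (hg : ∀ n : ℕ, ((m + n : ℕ) : ℕ∞) < x → 1 ≤ g n) :
    (x : ℝ≥0∞) ≤ m + ∑' n, g n := by
  induction x using ENat.recTopCoe with
  | top =>
    calc ((⊤ : ℕ∞) : ℝ≥0∞) = ∑' _ : ℕ, (1 : ℝ≥0∞) := by simp
      _ ≤ ∑' n, g n := ENNReal.tsum_le_tsum fun n => hg n (ENat.natCast_lt_top _)
      _ ≤ m + ∑' n, g n := le_add_self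
  | coe j =>
    rcases le_total j m with hjm | hmj
    · simpa using le_add_right (Nat.cast_le.mpr hjm : (j : ℝ≥0∞) ≤ m)
    obtain ⟨d, rfl⟩ := Nat.exists_eq_add_of_le hmj
    have hd : (d : ℝ≥0∞) ≤ ∑' n, g n :=
      calc (d : ℝ≥0∞) = ∑ _n ∈ Finset.range d, 1 := by simp
        _ ≤ ∑ n ∈ Finset.range d, g n := Finset.sum_le_sum fun n hn =>
            hg n (by simpa using Finset.mem_range.mp hn)
        _ ≤ ∑' n, g n := ENNReal.sum_le_tsum _
    simpa using add_le_add_left hd (m : ℝ≥0∞)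

lemma lintegral_enat_le_add_tsum {Ω : Type*} [MeasurableSpace Ω] (μ : Measure Ω)
    [IsProbabilityMeasure μ] (N : Ω → ℕ∞) {B : ℕ → Set Ω} (hB : ∀ j, MeasurableSet (B j))
    (m : ℕ) (hNB : ∀ j ≥ m, ∀ ω, (j : ℕ∞) < N ω → ω ∈ B j) :
    ∫⁻ ω, (N ω : ℝ≥0∞) ∂μ ≤ m + ∑' n, μ (B (m + n)) :=
  calc ∫⁻ ω, (N ω : ℝ≥0∞) ∂μ ≤ ∫⁻ ω, (m + ∑' n, (B (m + n)).indicator 1 ω) ∂μ :=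
        lintegral_mono fun ω => ENat.toENNReal_le_add_tsum fun n hn => by
          rw [Set.indicator_of_mem (hNB _ (Nat.le_add_right m n) ω hn)]; rfl
    _ = m + ∑' n, μ (B (m + n)) := by
        rw [lintegral_add_left measurable_const, lintegral_const, measure_univ, mul_one,
          lintegral_tsum fun n => (measurable_one.indicator (hB _)).aemeasurable]
        simp_rw [lintegral_indicator_one (hB _)]

lemma limsup_div_log_le {f : ℝ → ℝ≥0∞} {q : ℝ} {C : ℝ≥0∞} (hq : 0 ≤ q) (hC : C ≠ ⊤)
    (hf : ∀ᶠ T in atTop, f T ≤ ENNReal.ofReal (q * Real.log T) + C) :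
    limsup (fun T => f T / ENNReal.ofReal (Real.log T)) atTop ≤ ENNReal.ofReal q := by
  have hlog : Tendsto (fun T => ENNReal.ofReal (Real.log T)) atTop (𝓝 ⊤) :=
    ENNReal.tendsto_ofReal_atTop.comp Real.tendsto_log_atTop
  have hsmall : Tendsto (fun T => C / ENNReal.ofReal (Real.log T)) atTop (𝓝 0) := by
    simpa [div_eq_mul_inv] using
      ENNReal.Tendsto.const_mul (tendsto_inv_iff.mpr hlog) (Or.inr hC)
  have hbound : ∀ᶠ T in atTop, f T / ENNReal.ofReal (Real.log T)
      ≤ ENNReal.ofReal q + C / ENNReal.ofReal (Real.log T) := by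
    filter_upwards [hf, eventually_gt_atTop 1] with T hfT hT
    have hL : ENNReal.ofReal (Real.log T) ≠ 0 := by simpa using Real.log_pos hT
    calc f T / ENNReal.ofReal (Real.log T)
        ≤ (ENNReal.ofReal (q * Real.log T) + C) / ENNReal.ofReal (Real.log T) := by gcongr
      _ = ENNReal.ofReal q + C / ENNReal.ofReal (Real.log T) := by
          rw [ENNReal.add_div, ENNReal.ofReal_mul hq, mul_div_assoc,
            ENNReal.div_self hL ENNReal.ofReal_ne_top, mul_one]
  calc limsup (fun T => f T / ENNReal.ofReal (Real.log T)) atTop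
      ≤ limsup (fun T => ENNReal.ofReal q + C / ENNReal.ofReal (Real.log T)) atTop :=
        limsup_le_limsup hbound
    _ = ENNReal.ofReal q := by
        rw [(tendsto_const_nhds.add hsmall).limsup_eq, add_zero]

section SPRT

variable {Obs : Type*} [MeasurableSpace Obs] [MeasurableSingletonClass Obs]
  {Ω : Type*} [MeasurableSpace Ω] {μ : Measure Ω} {p : Obs → ℝ} {Y : ℕ → Ω → Obs}

lemma measure_tuple_mem_eq_sum [Nonempty Obs] (hY : ∀ k, Measurable (Y k))
    (hiid : ∀ (n : ℕ) (ys : ℕ → Obs),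
      μ {ω | ∀ k < n, Y k ω = ys k} = ∏ k ∈ Finset.range n, ENNReal.ofReal (p (ys k)))
    {n : ℕ} (S : Finset (Fin n → Obs)) :
    μ {ω | (fun k : Fin n => Y k ω) ∈ S} = ∑ ys ∈ S, ∏ k, ENNReal.ofReal (p (ys k)) := by
  classical
  have hmeas : Measurable fun ω (k : Fin n) => Y k ω := measurable_pi_lambda _ fun k => hY k
  change μ ((fun ω (k : Fin n) => Y k ω) ⁻¹' S) = _
  rw [← sum_measure_preimage_singleton S fun ys _ => hmeas (measurableSet_singleton ys)]
  refine Finset.sum_congr rfl fun ys _ => ?_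
  let ext : ℕ → Obs := fun k => if h : k < n then ys ⟨k, h⟩ else Classical.arbitrary Obs
  have hfiber : (fun ω (k : Fin n) => Y k ω) ⁻¹' {ys} = {ω | ∀ k < n, Y k ω = ext k} := by
    ext ω
    simp only [Set.mem_preimage, Set.mem_singleton_iff, funext_iff, Fin.forall_iff,
      Set.mem_ofPred_eq]
    exact forall₂_congr fun k hk => by simp [ext, hk]
  rw [hfiber, hiid, ← Fin.prod_univ_eq_prod_range]
  simp [ext]

variable [Fintype Obs] {p0 p1 : Obs → ℝ}

lemma measure_prod_lt_mul_prod_le [Nonempty Obs] (hp0 : ∀ y, 0 ≤ p0 y) (hp1 : ∀ y, 0 ≤ p1 y)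
    (hY : ∀ k, Measurable (Y k))
    (hiid : ∀ (n : ℕ) (ys : ℕ → Obs),
      μ {ω | ∀ k < n, Y k ω = ys k} = ∏ k ∈ Finset.range n, ENNReal.ofReal (p0 (ys k)))
    {t s : ℝ} (ht : 0 ≤ t) (hs : 0 ≤ s) (j : ℕ) :
    μ {ω | ∏ k ∈ Finset.range j, p0 (Y k ω) < t * ∏ k ∈ Finset.range j, p1 (Y k ω)}
      ≤ ENNReal.ofReal (t ^ s * chernoffCoeff p0 p1 s ^ j) := by
  classical
  let S := Finset.univ.filter fun ys : Fin j → Obs => ∏ k, p0 (ys k) < t * ∏ k, p1 (ys k)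
  have hset : {ω | ∏ k ∈ Finset.range j, p0 (Y k ω) < t * ∏ k ∈ Finset.range j, p1 (Y k ω)}
      = {ω | (fun k : Fin j => Y k ω) ∈ S} := by
    ext ω
    simp [S, Fin.prod_univ_eq_prod_range (fun k => p0 (Y k ω)),
      Fin.prod_univ_eq_prod_range (fun k => p1 (Y k ω))]
  have hterm : ∀ ys ∈ S,
      ∏ k, p0 (ys k) ≤ t ^ s * ∏ k, (p0 (ys k) ^ (1 - s) * p1 (ys k) ^ s) := by
    intro ys hys
    rw [Finset.prod_mul_distrib, Real.finsetProd_rpow _ _ fun k _ => hp0 _,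
      Real.finsetProd_rpow _ _ fun k _ => hp1 _]
    exact Real.le_rpow_mul_rpow_mul_rpow_of_le_mul (Finset.prod_nonneg fun k _ => hp0 _)
      (Finset.prod_nonneg fun k _ => hp1 _) ht hs (Finset.mem_filter.mp hys).2.le
  have hZ : ∀ ys : Fin j → Obs, 0 ≤ ∏ k, (p0 (ys k) ^ (1 - s) * p1 (ys k) ^ s) := fun ys =>
    Finset.prod_nonneg fun k _ => by have := hp0 (ys k); have := hp1 (ys k); positivity
  rw [hset, measure_tuple_mem_eq_sum hY hiid]
  calc ∑ ys ∈ S, ∏ k, ENNReal.ofReal (p0 (ys k))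
      = ENNReal.ofReal (∑ ys ∈ S, ∏ k, p0 (ys k)) := by
        rw [ENNReal.ofReal_sum_of_nonneg fun ys _ => Finset.prod_nonneg fun k _ => hp0 _]
        simp_rw [ENNReal.ofReal_prod_of_nonneg fun k _ => hp0 _]
    _ ≤ ENNReal.ofReal (∑ ys ∈ S, t ^ s * ∏ k, (p0 (ys k) ^ (1 - s) * p1 (ys k) ^ s)) :=
        ENNReal.ofReal_le_ofReal (Finset.sum_le_sum hterm)
    _ ≤ ENNReal.ofReal (∑ ys : Fin j → Obs, t ^ s * ∏ k, (p0 (ys k) ^ (1 - s) * p1 (ys k) ^ s)) :=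
        ENNReal.ofReal_le_ofReal (Finset.sum_le_sum_of_subset_of_nonneg (Finset.subset_univ S)
          fun ys _ _ => mul_nonneg (by positivity) (hZ ys))
    _ = ENNReal.ofReal (t ^ s * chernoffCoeff p0 p1 s ^ j) := by
        rw [← Finset.mul_sum, chernoffCoeff, Fintype.sum_pow]

lemma lintegral_le_of_chernoffCoeff_lt_one [IsProbabilityMeasure μ] [Nonempty Obs]
    (hp0 : ∀ y, 0 ≤ p0 y) (hp1 : ∀ y, 0 ≤ p1 y) (hY : ∀ k, Measurable (Y k))
    (hiid : ∀ (n : ℕ) (ys : ℕ → Obs),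
      μ {ω | ∀ k < n, Y k ω = ys k} = ∏ k ∈ Finset.range n, ENNReal.ofReal (p0 (ys k)))
    {c s T : ℝ} (hc : 0 ≤ c) (hs : 0 ≤ s) (hZ : chernoffCoeff p0 p1 s < 1) (hT : 1 ≤ T)
    (N : Ω → ℕ∞) (hN : ∀ ω (j : ℕ), 1 ≤ j →
      T ^ c * ∏ k ∈ Finset.range j, p1 (Y k ω) ≤ ∏ k ∈ Finset.range j, p0 (Y k ω) → N ω ≤ j) :
    ∫⁻ ω, (N ω : ℝ≥0∞) ∂μ
      ≤ ENNReal.ofReal (c * s / (1 - chernoffCoeff p0 p1 s) * Real.log T)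
        + (2 + (1 - ENNReal.ofReal (chernoffCoeff p0 p1 s))⁻¹) := by
  set Z := chernoffCoeff p0 p1 s
  have hZ0 : 0 ≤ Z := chernoffCoeff_nonneg hp0 hp1 s
  set x := c * s / (1 - Z) * Real.log T
  have hx : 0 ≤ x := by
    have := Real.log_nonneg hT
    have : 0 < 1 - Z := by linarith
    positivity
  -- `m ≥ x` makes `T^(cs) Z^m ≤ 1`; the `+ 1` keeps `m ≥ 1`, as `N` only stops at times `≥ 1`.
  set m := ⌈x⌉₊ + 1
  have hprod : ∀ (q : Obs → ℝ) j, Measurable fun ω => ∏ k ∈ Finset.range j, q (Y k ω) :=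
    fun q j => Finset.measurable_prod _ fun k _ => (measurable_of_finite q).comp (hY k)
  let B : ℕ → Set Ω := fun j =>
    {ω | ∏ k ∈ Finset.range j, p0 (Y k ω) < T ^ c * ∏ k ∈ Finset.range j, p1 (Y k ω)}
  have hB : ∀ j, MeasurableSet (B j) := fun j =>
    measurableSet_lt (hprod p0 j) ((hprod p1 j).const_mul _)
  have hNB : ∀ j ≥ m, ∀ ω, (j : ℕ∞) < N ω → ω ∈ B j := fun j hj ω hjN => by
    by_contra hjB
    exact (hN ω j (by omega) (not_lt.mp hjB)).not_gt hjN
  have hTc : 0 ≤ T ^ c := by positivity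
  have htail : ∑' n, μ (B (m + n)) ≤ (1 - ENNReal.ofReal Z)⁻¹ :=
    calc ∑' n, μ (B (m + n))
        ≤ ∑' n, ENNReal.ofReal (T ^ (c * s) * Z ^ m) * ENNReal.ofReal Z ^ n := by
          refine ENNReal.tsum_le_tsum fun n =>
            (measure_prod_lt_mul_prod_le hp0 hp1 hY hiid hTc hs (m + n)).trans_eq ?_
          rw [← Real.rpow_mul (by linarith), pow_add, ← mul_assoc,
            ENNReal.ofReal_mul (by positivity), ENNReal.ofReal_pow hZ0]
      _ = ENNReal.ofReal (T ^ (c * s) * Z ^ m) * (1 - ENNReal.ofReal Z)⁻¹ := by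
          rw [ENNReal.tsum_mul_left, ENNReal.tsum_geometric]
      _ ≤ (1 - ENNReal.ofReal Z)⁻¹ := mul_le_of_le_one_left' <| ENNReal.ofReal_le_one.mpr <|
          Real.rpow_mul_pow_le_one (by linarith) hZ0 hZ ((Nat.le_ceil x).trans (by simp [m]))
  have hm : (m : ℝ≥0∞) ≤ ENNReal.ofReal x + 2 := by
    rw [← ENNReal.ofReal_natCast, ← ENNReal.ofReal_ofNat 2, ← ENNReal.ofReal_add hx (by norm_num)]
    refine ENNReal.ofReal_le_ofReal ?_
    have := Nat.ceil_lt_add_one hx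
    push_cast [m]
    linarith
  calc ∫⁻ ω, (N ω : ℝ≥0∞) ∂μ ≤ m + ∑' n, μ (B (m + n)) := lintegral_enat_le_add_tsum μ N hB m hNB
    _ ≤ ENNReal.ofReal x + 2 + (1 - ENNReal.ofReal Z)⁻¹ := add_le_add hm htail
    _ = _ := add_assoc _ _ _

lemma limsup_lintegral_div_log_le [IsProbabilityMeasure μ]
    (hp0 : ∀ y, 0 ≤ p0 y) (hp1 : ∀ y, 0 ≤ p1 y)
    (hp0_sum : ∑ y, p0 y = 1) (hp1_sum : ∑ y, p1 y = 1) (hne : p0 ≠ p1)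
    (hsupp : ∀ y, p0 y = 0 ↔ p1 y = 0) (hY : ∀ k, Measurable (Y k))
    (hiid : ∀ (n : ℕ) (ys : ℕ → Obs),
      μ {ω | ∀ k < n, Y k ω = ys k} = ∏ k ∈ Finset.range n, ENNReal.ofReal (p0 (ys k)))
    {c : ℝ} (hc : 0 ≤ c) (N : ℝ → Ω → ℕ∞) (hN : ∀ T ω (j : ℕ), 1 ≤ j →
      T ^ c * ∏ k ∈ Finset.range j, p1 (Y k ω) ≤ ∏ k ∈ Finset.range j, p0 (Y k ω) → N T ω ≤ j) :
    limsup (fun T => (∫⁻ ω, (N T ω : ℝ≥0∞) ∂μ) / ENNReal.ofReal (Real.log T)) atTop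
      ≤ ENNReal.ofReal (c / ∑ y, p0 y * Real.log (p0 y / p1 y)) := by
  obtain ⟨y, -, -⟩ := Finset.exists_ne_zero_of_sum_ne_zero (hp0_sum ▸ one_ne_zero)
  have : Nonempty Obs := ⟨y⟩
  have hD := sum_mul_log_div_pos_s4 hp0 hp1 hp0_sum hp1_sum hne hsupp
  have hQ := tendsto_one_sub_chernoffCoeff_div hp0 hp1 hp0_sum hsupp
  refine ge_of_tendsto (ENNReal.tendsto_ofReal (tendsto_const_nhds.div hQ hD.ne')) ?_
  filter_upwards [hQ.eventually (eventually_gt_nhds hD), self_mem_nhdsWithin]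
    with s hQs (hs : 0 < s)
  have hZ : chernoffCoeff p0 p1 s < 1 := by
    linarith [(div_pos_iff_of_pos_right hs).mp hQs]
  simp only [Pi.div_apply]
  rw [div_div_eq_mul_div]
  refine limsup_div_log_le (div_nonneg (mul_nonneg hc hs.le) (by linarith)) ?_
    ((eventually_ge_atTop 1).mono fun T hT =>
      lintegral_le_of_chernoffCoeff_lt_one hp0 hp1 hY hiid hc hs.le hZ hT (N T) (hN T))
  exact ENNReal.add_ne_top.mpr ⟨ENNReal.ofNat_ne_top, ENNReal.inv_ne_top.mpr
    (tsub_pos_of_lt (ENNReal.ofReal_lt_one.mpr hZ)).ne'⟩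

end SPRT

/-- **Expected-stopping-time asymptotics of the two-threshold binary SPRT.**
`p0 ≠ p1` are pmfs on a finite set `Obs` with mutually finite KL divergences
(equal supports); under hypothesis `i ∈ {0,1}` the observations are i.i.d.
with pmf `p i`.  With `c > 0` and, for each threshold `T`,
`N0(T) = min{n ≥ 1 : p0(Y^n) ≥ T^c · p1(Y^n)}`,
`N1(T) = min{n ≥ 1 : p1(Y^n) ≥ T · p0(Y^n)}` and `N = min (N0, N1)`, one has
`limsup_{T→∞} 𝔼_0[N]/log T ≤ c / D(p0‖p1)` and
`limsup_{T→∞} 𝔼_1[N]/log T ≤ 1 / D(p1‖p0)`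
(stated in `ℝ≥0∞` so that infinite expectations falsify the bounds). -/
theorem stmt_4 {Obs : Type*} [Fintype Obs]
    [MeasurableSpace Obs] [MeasurableSingletonClass Obs]
    (p0 p1 : Obs → ℝ)
    (hp0_nonneg : ∀ y, 0 ≤ p0 y) (hp1_nonneg : ∀ y, 0 ≤ p1 y)
    (hp0_sum : ∑ y, p0 y = 1) (hp1_sum : ∑ y, p1 y = 1)
    (hne : p0 ≠ p1)
    (hsupp : ∀ y, p0 y = 0 ↔ p1 y = 0)
    (Ω : Type*) [MeasurableSpace Ω]
    (ℙ0 ℙ1 : Measure Ω)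
    (hprob0 : IsProbabilityMeasure ℙ0) (hprob1 : IsProbabilityMeasure ℙ1)
    (Y : ℕ → Ω → Obs) (hYmeas : ∀ k, Measurable (Y k))
    (hiid0 : ∀ (n : ℕ) (ys : ℕ → Obs),
      ℙ0 {ω | ∀ k < n, Y k ω = ys k}
        = ∏ k ∈ Finset.range n, ENNReal.ofReal (p0 (ys k)))
    (hiid1 : ∀ (n : ℕ) (ys : ℕ → Obs),
      ℙ1 {ω | ∀ k < n, Y k ω = ys k}
        = ∏ k ∈ Finset.range n, ENNReal.ofReal (p1 (ys k)))
    (c : ℝ) (hc : 0 < c) :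
    (Filter.limsup
      (fun T : ℝ =>
        (∫⁻ ω,
            ((min
              (sInf {n : ℕ∞ | ∃ m' : ℕ, (m' : ℕ∞) = n ∧ 1 ≤ m' ∧
                T ^ c * ∏ k ∈ Finset.range m', p1 (Y k ω)
                  ≤ ∏ k ∈ Finset.range m', p0 (Y k ω)})
              (sInf {n : ℕ∞ | ∃ m' : ℕ, (m' : ℕ∞) = n ∧ 1 ≤ m' ∧
                T * ∏ k ∈ Finset.range m', p0 (Y k ω)
                  ≤ ∏ k ∈ Finset.range m', p1 (Y k ω)}) : ℕ∞) : ℝ≥0∞)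
          ∂ℙ0)
          / ENNReal.ofReal (Real.log T))
      Filter.atTop
      ≤ ENNReal.ofReal (c / ∑ y, p0 y * Real.log (p0 y / p1 y)))
    ∧
    (Filter.limsup
      (fun T : ℝ =>
        (∫⁻ ω,
            ((min
              (sInf {n : ℕ∞ | ∃ m' : ℕ, (m' : ℕ∞) = n ∧ 1 ≤ m' ∧
                T ^ c * ∏ k ∈ Finset.range m', p1 (Y k ω)
                  ≤ ∏ k ∈ Finset.range m', p0 (Y k ω)})
              (sInf {n : ℕ∞ | ∃ m' : ℕ, (m' : ℕ∞) = n ∧ 1 ≤ m' ∧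
                T * ∏ k ∈ Finset.range m', p0 (Y k ω)
                  ≤ ∏ k ∈ Finset.range m', p1 (Y k ω)}) : ℕ∞) : ℝ≥0∞)
          ∂ℙ1)
          / ENNReal.ofReal (Real.log T))
      Filter.atTop
      ≤ ENNReal.ofReal (1 / ∑ y, p1 y * Real.log (p1 y / p0 y))) := by
  constructor
  · exact limsup_lintegral_div_log_le hp0_nonneg hp1_nonneg hp0_sum hp1_sum hne hsupp hYmeas
      hiid0 hc.le _ fun T ω j hj h => (min_le_left _ _).trans (sInf_le ⟨j, rfl, hj, h⟩)
  · refine limsup_lintegral_div_log_le hp1_nonneg hp0_nonneg hp1_sum hp0_sum hne.symm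
      (fun y => (hsupp y).symm) hYmeas hiid1 zero_le_one _ fun T ω j hj h => ?_
    rw [Real.rpow_one] at h
    exact (min_le_right _ _).trans (sInf_le ⟨j, rfl, hj, h⟩)
end

section
/- Let 𝒴 be a finite nonempty set and let P(y|ỹ) be a transition kernel on 𝒴 (i.e. P(·|ỹ) is a pmf on 𝒴 for each ỹ) with P(y|ỹ) > 0 for all y, ỹ ∈ 𝒴. Then there exists a unique pmf μ on 𝒴 that is stationary for P, i.e. satisfying μ(y) = Σ_{ỹ∈𝒴} μ(ỹ) P(y|ỹ) for every y ∈ 𝒴. -/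
/-!
Existence: a matrix with unit row sums fixes the all-ones vector, so `M - 1` is singular and has
a nonzero left null vector `v`. From `v ᵥ* M = v` and `M ≥ 0` the triangle inequality gives
`|v| ≤ |v| ᵥ* M` entrywise; both sides have the same total mass, so `|v|` is stationary too, and
normalising it yields a stationary pmf.

Uniqueness: if every entry of `M` is at least `ε`, left multiplication by `M` shrinks the `ℓ¹`
norm of zero-sum vectors by the factor `1 - card n * ε < 1`. The difference of two stationary
pmfs is such a vector, fixed by `M`, hence zero.
-/

open Finset

namespace Matrix

variable {n : Type*} [Fintype n]

theorem sum_vecMul_of_sum_row_eq_one {R : Type*} [NonAssocSemiring R] {M : Matrix n n R}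
    (hM : ∀ i, ∑ j, M i j = 1) (x : n → R) :
    ∑ j, (x ᵥ* M) j = ∑ i, x i := by
  simp only [vecMul, dotProduct]
  rw [sum_comm]
  simp only [← mul_sum, hM, mul_one]

theorem exists_vecMul_eq_self_of_sum_row_eq_one {R : Type*} [CommRing R] [IsDomain R]
    [DecidableEq n] [Nonempty n] {M : Matrix n n R} (hM : ∀ i, ∑ j, M i j = 1) :
    ∃ v ≠ 0, v ᵥ* M = v := by
  have hdet : (M - 1).det = 0 := by
    refine exists_mulVec_eq_zero_iff.1 ⟨1, one_ne_zero, ?_⟩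
    rw [sub_mulVec, one_mulVec, sub_eq_zero]
    ext i
    simp [mulVec, dotProduct, hM]
  obtain ⟨v, hv, hvM⟩ := exists_vecMul_eq_zero_iff.2 hdet
  exact ⟨v, hv, by rwa [vecMul_sub, vecMul_one, sub_eq_zero] at hvM⟩

variable {R : Type*} [CommRing R] [LinearOrder R] [IsStrictOrderedRing R] {M : Matrix n n R}

theorem abs_vecMul_eq_self_of_mem_rowStochastic [DecidableEq n] (hM : M ∈ rowStochastic R n)
    {v : n → R} (hv : v ᵥ* M = v) : |v| ᵥ* M = |v| := by
  have hle : ∀ j ∈ univ, |v| j ≤ (|v| ᵥ* M) j := fun j _ =>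
    calc |v j| = |∑ i, v i * M i j| := by rw [← congrFun hv j]; rfl
      _ ≤ ∑ i, |v i * M i j| := abs_sum_le_sum_abs _ _
      _ = (|v| ᵥ* M) j := by
        simp only [abs_mul, abs_of_nonneg (hM.1 _ _)]; rfl
  have hsum := sum_vecMul_of_sum_row_eq_one (mem_rowStochastic_iff_sum.1 hM).2 |v|
  funext j
  exact ((sum_eq_sum_iff_of_le hle).1 hsum.symm j (mem_univ j)).symm

theorem sum_abs_vecMul_le (hM : ∀ i, ∑ j, M i j = 1) {ε : R} (hε : ∀ i j, ε ≤ M i j)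
    {f : n → R} (hf : ∑ i, f i = 0) :
    ∑ j, |(f ᵥ* M) j| ≤ (1 - Fintype.card n * ε) * ∑ i, |f i| := by
  have hcol : ∀ j, |(f ᵥ* M) j| ≤ ∑ i, |f i| * (M i j - ε) := fun j =>
    -- Since `∑ f = 0`, lowering every entry of `M` by `ε` does not change `f ᵥ* M`.
    calc |(f ᵥ* M) j| = |∑ i, f i * (M i j - ε)| := by
          simp only [mul_sub, sum_sub_distrib, ← sum_mul, hf, zero_mul, sub_zero]; rfl
      _ ≤ ∑ i, |f i * (M i j - ε)| := abs_sum_le_sum_abs _ _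
      _ = ∑ i, |f i| * (M i j - ε) := by
          simp only [abs_mul, abs_of_nonneg (sub_nonneg.2 (hε _ _))]
  calc ∑ j, |(f ᵥ* M) j| ≤ ∑ j, ∑ i, |f i| * (M i j - ε) := sum_le_sum fun j _ => hcol j
    _ = (1 - Fintype.card n * ε) * ∑ i, |f i| := by
      rw [sum_comm, mul_sum]
      simp only [← mul_sum, sum_sub_distrib, hM, sum_const, card_univ, nsmul_eq_mul, mul_comm]

theorem eq_zero_of_vecMul_eq_self_of_sum_eq_zero (hpos : ∀ i j, 0 < M i j)
    (hM : ∀ i, ∑ j, M i j = 1) {f : n → R} (hfM : f ᵥ* M = f) (hf : ∑ i, f i = 0) :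
    f = 0 := by
  funext k
  have : Nonempty n := ⟨k⟩
  obtain ⟨⟨i₀, j₀⟩, hmin⟩ := Finite.exists_min fun p : n × n => M p.1 p.2
  have hgap : 0 < (Fintype.card n : R) * M i₀ j₀ :=
    mul_pos (by exact_mod_cast Fintype.card_pos) (hpos i₀ j₀)
  have hcontr := sum_abs_vecMul_le hM (fun i j => hmin (i, j)) hf
  rw [hfM] at hcontr
  have habs : ∀ i ∈ univ, 0 ≤ |f i| := fun i _ => abs_nonneg (f i)
  have hzero : ∑ i, |f i| = 0 := by nlinarith [sum_nonneg habs]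
  exact abs_eq_zero.1 ((sum_eq_zero_iff_of_nonneg habs).1 hzero k (mem_univ k))

theorem exists_stationary_of_mem_rowStochastic {K : Type*} [Field K] [LinearOrder K]
    [IsStrictOrderedRing K] [DecidableEq n] [Nonempty n] {M : Matrix n n K}
    (hM : M ∈ rowStochastic K n) :
    ∃ μ : n → K, (∀ i, 0 ≤ μ i) ∧ ∑ i, μ i = 1 ∧ μ ᵥ* M = μ := by
  obtain ⟨v, hv, hvM⟩ :=
    exists_vecMul_eq_self_of_sum_row_eq_one (mem_rowStochastic_iff_sum.1 hM).2
  have hpos : 0 < ∑ i, |v i| := by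
    obtain ⟨i, hi⟩ := Function.ne_iff.1 hv
    exact sum_pos' (fun i _ => abs_nonneg _) ⟨i, mem_univ i, abs_pos.2 hi⟩
  refine ⟨(∑ i, |v i|)⁻¹ • |v|, fun i => ?_, ?_, ?_⟩
  · simp only [Pi.smul_apply, Pi.abs_apply, smul_eq_mul]; positivity
  · simp only [Pi.smul_apply, Pi.abs_apply, smul_eq_mul, ← mul_sum]
    exact inv_mul_cancel₀ hpos.ne'
  · rw [smul_vecMul, abs_vecMul_eq_self_of_mem_rowStochastic hM hvM]

end Matrix

open Matrix in
/-- **Existence and uniqueness of the stationary pmf** for a strictly positive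
transition kernel on a finite nonempty set.  A pmf on a finite set `Obs` is a
nonnegative function summing to one; `P ytil y` denotes the transition
probability `P(y | ytil)`. -/
theorem stmt_5 {Obs : Type*} [Fintype Obs] [Nonempty Obs]
    (P : Obs → Obs → ℝ)
    (hP_pos : ∀ ytil y, 0 < P ytil y)
    (hP_sum : ∀ ytil, ∑ y, P ytil y = 1) :
    ∃! μ : Obs → ℝ,
      (∀ y, 0 ≤ μ y) ∧ (∑ y, μ y = 1) ∧
      (∀ y, μ y = ∑ ytil, μ ytil * P ytil y) := by
  classical
  obtain ⟨μ, hμ_nonneg, hμ_sum, hμP⟩ := exists_stationary_of_mem_rowStochastic (M := P)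
    (mem_rowStochastic_iff_sum.2 ⟨fun i j => (hP_pos i j).le, hP_sum⟩)
  refine ⟨μ, ⟨hμ_nonneg, hμ_sum, fun y => (congrFun hμP y).symm⟩, ?_⟩
  rintro ν ⟨-, hν_sum, hνP⟩
  have hνP' : ν ᵥ* P = ν := funext fun y => (hνP y).symm
  refine sub_eq_zero.1 (eq_zero_of_vecMul_eq_self_of_sum_eq_zero (M := P) hP_pos hP_sum ?_ ?_)
  · exact (sub_vecMul (A := (P : Matrix Obs Obs ℝ)) ν μ).trans (by rw [hνP', hμP])
  · simp only [Pi.sub_apply, sum_sub_distrib, hν_sum, hμ_sum, sub_self]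
end

section
/- In the controlled Markovian observation model, for every pair of hypotheses i ≠ j and all ε ∈ (0,1), η > 0, there exists α > 0 such that every sequential test (φ, N, δ) with ℙ_m{N < ∞} = 1 for every m, with maximal error probability P_max ≤ α and with risk R_i > 0 satisfies ℙ_i{ log(p_i(Y^N, U^N) / p_j(Y^N, U^N)) ≤ −(1−ε) log R_i } ≤ η. -/
open MeasureTheory
open scoped ENNReal

/-- A causal control policy: `q k ys us u` is the conditional pmf of the
control at time `k` (`k ≥ 1`) given past observations `y_0, …, y_{k-1}` and
past controls `u_1, …, u_{k-1}`, evaluated at `u`. -/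
def IsPolicy {Obs Ctl : Type*} [Fintype Ctl]
    (q : ℕ → (ℕ → Obs) → (ℕ → Ctl) → Ctl → ℝ) : Prop :=
  (∀ k ys us u, 0 ≤ q k ys us u) ∧
  (∀ k ys us, ∑ u, q k ys us u = 1) ∧
  (∀ k ys ys' us us', (∀ m, m < k → ys m = ys' m) →
    (∀ m, 1 ≤ m → m < k → us m = us' m) → q k ys us = q k ys' us')

/-- The joint pmf `p_i(y^n, u^n)` of the first `n` observations and controls
under hypothesis `i`, for kernels `P` and causal control policy `q`. -/
noncomputable def jointP {Obs Ctl : Type*} [Fintype Obs] [Fintype Ctl] {M : ℕ}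
    (P : Fin M → Ctl → Obs → Obs → ℝ)
    (q : ℕ → (ℕ → Obs) → (ℕ → Ctl) → Ctl → ℝ)
    (i : Fin M) (n : ℕ) (ys : ℕ → Obs) (us : ℕ → Ctl) : ℝ :=
  ∏ k ∈ Finset.Icc 1 n, q k ys us (us k) * P i (us k) (ys (k - 1)) (ys k)

/-- The processes `(Y, U)` on `(Ω, ℙ i)` realize the controlled Markovian
observation model with kernels `P`, initial observation `y0` and policy `q`. -/
def IsModel {Obs Ctl : Type*} [Fintype Obs] [Fintype Ctl]
    [MeasurableSpace Obs] [MeasurableSpace Ctl] {M : ℕ}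
    {Ω : Type*} [MeasurableSpace Ω]
    (P : Fin M → Ctl → Obs → Obs → ℝ) (y0 : Obs)
    (q : ℕ → (ℕ → Obs) → (ℕ → Ctl) → Ctl → ℝ)
    (ℙ : Fin M → Measure Ω) (Y : ℕ → Ω → Obs) (U : ℕ → Ω → Ctl) : Prop :=
  (∀ k, Measurable (Y k)) ∧ (∀ k, Measurable (U k)) ∧
  (∀ ω, Y 0 ω = y0) ∧
  (∀ (i : Fin M) (n : ℕ) (ys : ℕ → Obs) (us : ℕ → Ctl), ys 0 = y0 →
    ℙ i {ω | ∀ k, 1 ≤ k → k ≤ n → Y k ω = ys k ∧ U k ω = us k}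
      = ENNReal.ofReal (jointP P q i n ys us))

lemma jointP_congr {Obs Ctl : Type*} [Fintype Obs] [Fintype Ctl] {M : ℕ}
    (P : Fin M → Ctl → Obs → Obs → ℝ)
    {q : ℕ → (ℕ → Obs) → (ℕ → Ctl) → Ctl → ℝ} (hq : IsPolicy q)
    (i : Fin M) (n : ℕ) {ys ys' : ℕ → Obs} {us us' : ℕ → Ctl}
    (hys : ∀ k ≤ n, ys k = ys' k) (hus : ∀ k, 1 ≤ k → k ≤ n → us k = us' k) :
    jointP P q i n ys us = jointP P q i n ys' us' := by
  unfold jointP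
  refine Finset.prod_congr rfl fun k hk => ?_
  simp only [Finset.mem_Icc] at hk
  rw [hq.2.2 k ys ys' us us' (fun m hm => hys m (by omega))
      (fun m h1 hm => hus m h1 (by omega)),
    hus k hk.1 hk.2, hys (k-1) (by omega), hys k hk.2]

lemma jointP_nonneg {Obs Ctl : Type*} [Fintype Obs] [Fintype Ctl] {M : ℕ}
    {P : Fin M → Ctl → Obs → Obs → ℝ}
    (hP : ∀ i u ytil y, 0 < P i u ytil y)
    {q : ℕ → (ℕ → Obs) → (ℕ → Ctl) → Ctl → ℝ} (hq : IsPolicy q)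
    (i : Fin M) (n : ℕ) (ys : ℕ → Obs) (us : ℕ → Ctl) :
    0 ≤ jointP P q i n ys us :=
  Finset.prod_nonneg fun k _ => mul_nonneg (hq.1 k ys us (us k)) (hP _ _ _ _).le

lemma jointP_pos_transfer {Obs Ctl : Type*} [Fintype Obs] [Fintype Ctl] {M : ℕ}
    {P : Fin M → Ctl → Obs → Obs → ℝ}
    (hP : ∀ i u ytil y, 0 < P i u ytil y)
    {q : ℕ → (ℕ → Obs) → (ℕ → Ctl) → Ctl → ℝ} (hq : IsPolicy q)
    (i j : Fin M) (n : ℕ) (ys : ℕ → Obs) (us : ℕ → Ctl)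
    (h : 0 < jointP P q i n ys us) : 0 < jointP P q j n ys us := by
  refine Finset.prod_pos fun k hk => mul_pos ?_ (hP _ _ _ _)
  have hne : jointP P q i n ys us ≠ 0 := ne_of_gt h
  unfold jointP at hne
  rw [Finset.prod_ne_zero_iff] at hne
  have h2 := hne k hk
  rcases lt_or_eq_of_le (hq.1 k ys us (us k)) with h' | h'
  · exact h'
  · exact absurd (by rw [← h', zero_mul]) h2


/-- **Lower bound on the log-likelihood ratio at the stopping time** (the key
converse lemma): in the controlled Markovian observation model, for every pair
of hypotheses `i ≠ j`, every `ε ∈ (0,1)` and `η > 0`, there is `α > 0` such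
that every sequential test that stops a.s. under every hypothesis, has maximal
error probability `P_max ≤ α` and risk `R_i > 0`, satisfies
`ℙ_i{ log (p_i(Y^N,U^N) / p_j(Y^N,U^N)) ≤ -(1-ε) log R_i } ≤ η`. -/
theorem stmt_13 {Obs Ctl : Type*} [Fintype Obs] [Fintype Ctl]
    [MeasurableSpace Obs] [MeasurableSingletonClass Obs]
    [MeasurableSpace Ctl] [MeasurableSingletonClass Ctl]
    {M : ℕ} (hM : 2 ≤ M)
    (P : Fin M → Ctl → Obs → Obs → ℝ)
    (hP_pos : ∀ i u ytil y, 0 < P i u ytil y)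
    (hP_sum : ∀ i u ytil, ∑ y, P i u ytil y = 1)
    (y0 : Obs)
    (i j : Fin M) (hij : i ≠ j)
    (ε : ℝ) (hε : ε ∈ Set.Ioo (0 : ℝ) 1) (η : ℝ) (hη : 0 < η) :
    ∃ α > (0 : ℝ),
      ∀ (q : ℕ → (ℕ → Obs) → (ℕ → Ctl) → Ctl → ℝ), IsPolicy q →
      ∀ (Ω : Type*) (_ : MeasurableSpace Ω)
        (ℙ : Fin M → Measure Ω), (∀ m, IsProbabilityMeasure (ℙ m)) →
      ∀ (Y : ℕ → Ω → Obs) (U : ℕ → Ω → Ctl), IsModel P y0 q ℙ Y U →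
      ∀ (N : Ω → ℕ∞) (δ : Ω → Fin M),
      (∀ n : ℕ, MeasurableSet {ω | N ω = (n : ℕ∞)}) →
      (∀ m, MeasurableSet {ω | δ ω = m}) →
      -- `N` is a stopping time of the observation/control filtration
      (∀ (n : ℕ) ω ω', (∀ k ≤ n, Y k ω = Y k ω') →
        (∀ k, 1 ≤ k → k ≤ n → U k ω = U k ω') →
        N ω = (n : ℕ∞) → N ω' = (n : ℕ∞)) →
      -- `δ` is determined by the data up to time `N`
      (∀ (n : ℕ) ω ω', (∀ k ≤ n, Y k ω = Y k ω') →
        (∀ k, 1 ≤ k → k ≤ n → U k ω = U k ω') →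
        N ω = (n : ℕ∞) → N ω' = (n : ℕ∞) → δ ω = δ ω') →
      -- the test stops a.s. under every hypothesis
      (∀ m, ℙ m {ω | N ω ≠ ⊤} = 1) →
      -- maximal error probability at most `α`
      (∀ m, (ℙ m {ω | δ ω ≠ m}).toReal ≤ α) →
      -- positive risk `R_i`
      0 < sSup {x : ℝ | ∃ j', j' ≠ i ∧ x = (ℙ j' {ω | δ ω = i}).toReal} →
      ℙ i {ω | ∃ m : ℕ, N ω = (m : ℕ∞) ∧
          Real.log (jointP P q i m (fun k => Y k ω) (fun k => U k ω)
              / jointP P q j m (fun k => Y k ω) (fun k => U k ω))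
            ≤ -(1 - ε) * Real.log (sSup {x : ℝ | ∃ j', j' ≠ i ∧
                x = (ℙ j' {ω' | δ ω' = i}).toReal})}
        ≤ ENNReal.ofReal η := by
  classical
  obtain ⟨hε0, hε1⟩ := hε
  have hη2 : (0:ℝ) < η/2 := by linarith
  have hα0 : (0:ℝ) < min (η/2) (Real.exp (Real.log (η/2) / ε)) :=
    lt_min hη2 (Real.exp_pos _)
  refine ⟨min (η/2) (Real.exp (Real.log (η/2) / ε)), hα0, ?_⟩
  set α := min (η/2) (Real.exp (Real.log (η/2) / ε)) with hαdef
  intro q hq Ω mΩ ℙ hprob Y U hmodel N δ hNmeas hδmeas hstop hdet hfin herr hRpos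
  obtain ⟨hYm, hUm, hY0, hcylP⟩ := hmodel
  have hΩne : Nonempty Ω := by
    by_contra h
    haveI := hprob i
    have h1 : (ℙ i) Set.univ = 1 := measure_univ
    rw [Set.univ_eq_empty_iff.mpr (not_nonempty_iff.mp h), measure_empty] at h1
    exact zero_ne_one h1
  obtain ⟨ω₀⟩ := hΩne
  set R := sSup {x : ℝ | ∃ j', j' ≠ i ∧ x = (ℙ j' {ω' | δ ω' = i}).toReal} with hRdef
  have hmemα : ∀ x ∈ {x : ℝ | ∃ j', j' ≠ i ∧ x = (ℙ j' {ω' | δ ω' = i}).toReal},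
      x ≤ α := by
    rintro x ⟨j', hj', rfl⟩
    haveI := hprob j'
    refine le_trans (ENNReal.toReal_mono (measure_ne_top _ _) (measure_mono ?_)) (herr j')
    intro ω hω
    simp only [Set.mem_setOf_eq] at hω ⊢
    rw [hω]
    exact fun h => hj' h.symm
  have hRα : R ≤ α := Real.sSup_le hmemα hα0.le
  have hℙjR : ℙ j {ω' | δ ω' = i} ≤ ENNReal.ofReal R := by
    haveI := hprob j
    rw [← ENNReal.ofReal_toReal (measure_ne_top (ℙ j) {ω' | δ ω' = i})]
    exact ENNReal.ofReal_le_ofReal (le_csSup ⟨α, hmemα⟩ ⟨j, Ne.symm hij, rfl⟩)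
  set c : ℝ := -(1 - ε) * Real.log R with hcdef
  set K : ℝ := Real.exp c with hKdef
  set S : ℕ → Set Ω := fun n => {ω | N ω = (n:ℕ∞) ∧ δ ω = i ∧
    Real.log (jointP P q i n (fun k => Y k ω) (fun k => U k ω) /
              jointP P q j n (fun k => Y k ω) (fun k => U k ω)) ≤ c} with hSdef
  set Φ : ∀ n : ℕ, Ω → (Fin (n+1) → Obs) × (Fin n → Ctl) :=
    fun n ω => (fun k => Y (k : ℕ) ω, fun k => U ((k : ℕ) + 1) ω) with hΦdef
  set eY : ∀ n : ℕ, (Fin (n+1) → Obs) → ℕ → Obs :=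
    fun n f k => if h : k ≤ n then f ⟨k, by omega⟩ else y0 with heYdef
  set eU : ∀ n : ℕ, (Fin n → Ctl) → ℕ → Ctl :=
    fun n g k => if h : 1 ≤ k ∧ k ≤ n then g ⟨k-1, by omega⟩ else U 0 ω₀ with heUdef
  have hagree : ∀ (n : ℕ) (ω : Ω), (∀ k ≤ n, Y k ω = eY n (Φ n ω).1 k) ∧
      (∀ k, 1 ≤ k → k ≤ n → U k ω = eU n (Φ n ω).2 k) := by
    intro n ω
    constructor
    · intro k hk
      show Y k ω = eY n (Φ n ω).1 k
      rw [heYdef]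
      simp only [hΦdef]
      rw [dif_pos hk]
    · intro k h1 hk
      show U k ω = eU n (Φ n ω).2 k
      rw [heUdef]
      simp only [hΦdef]
      rw [dif_pos ⟨h1, hk⟩]
      congr 1
      omega
  have hmeasΦ : ∀ (n : ℕ) t, MeasurableSet (Φ n ⁻¹' {t}) := by
    intro n t
    have heq : Φ n ⁻¹' {t} =
        (⋂ k : Fin (n+1), Y (k : ℕ) ⁻¹' {t.1 k}) ∩
          ⋂ k : Fin n, U ((k : ℕ) + 1) ⁻¹' {t.2 k} := by
      ext ω
      simp [hΦdef, Prod.ext_iff, funext_iff]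
    rw [heq]
    exact (MeasurableSet.iInter fun k => hYm _ (measurableSet_singleton _)).inter
      (MeasurableSet.iInter fun k => hUm _ (measurableSet_singleton _))
  have hmeasP : ∀ (m : Fin M) (n : ℕ) t, t.1 0 = y0 →
      ℙ m (Φ n ⁻¹' {t}) = ENNReal.ofReal (jointP P q m n (eY n t.1) (eU n t.2)) := by
    intro m n t ht0
    have hcyl : Φ n ⁻¹' {t} =
        {ω | ∀ k, 1 ≤ k → k ≤ n → Y k ω = eY n t.1 k ∧ U k ω = eU n t.2 k} := by
      ext ω
      simp only [Set.mem_preimage, Set.mem_singleton_iff, Prod.ext_iff, funext_iff,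
        Set.mem_setOf_eq, hΦdef]
      constructor
      · rintro ⟨h1, h2⟩ k hk1 hkn
        constructor
        · rw [heYdef]
          simp only
          rw [dif_pos hkn]
          exact h1 ⟨k, by omega⟩
        · rw [heUdef]
          simp only
          rw [dif_pos ⟨hk1, hkn⟩]
          have h3 : U ((k - 1) + 1) ω = t.2 ⟨k - 1, by omega⟩ := h2 ⟨k - 1, by omega⟩
          rw [show (k - 1) + 1 = k by omega] at h3
          exact h3
      · intro h
        constructor
        · intro k
          rcases Nat.eq_zero_or_pos (k : ℕ) with h0 | h0
          · have hk0 : k = 0 := by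
              apply Fin.ext
              simp [h0]
            rw [hk0, ht0]
            simpa using hY0 ω
          · have h' := (h (k : ℕ) h0 (by omega)).1
            rw [heYdef] at h'
            simp only at h'
            rw [dif_pos (show (k:ℕ) ≤ n by omega)] at h'
            rw [h']
        · intro k
          have h' := (h ((k : ℕ) + 1) (by omega) (by omega)).2
          rw [heUdef] at h'
          simp only at h'
          rw [dif_pos ⟨by omega, by omega⟩] at h'
          rw [h']
          congr 1
    rw [hcyl]
    refine hcylP m n (eY n t.1) (eU n t.2) ?_
    rw [heYdef]
    simp only
    rw [dif_pos (Nat.zero_le n)]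
    rw [show (⟨0, by omega⟩ : Fin (n+1)) = 0 from Fin.ext rfl]
    exact ht0
  have hfiber : ∀ (n : ℕ) (ω ω' : Ω), Φ n ω = Φ n ω' → ω ∈ S n → ω' ∈ S n := by
    intro n ω ω' hΦeq hω
    have hYeq : ∀ k ≤ n, Y k ω = Y k ω' := by
      intro k hk
      have h1 : Y k ω = Y k ω' := congrFun (congrArg Prod.fst hΦeq) ⟨k, by omega⟩
      exact h1
    have hUeq : ∀ k, 1 ≤ k → k ≤ n → U k ω = U k ω' := by
      intro k h1 hk
      have h2 : U ((k - 1) + 1) ω = U ((k - 1) + 1) ω' :=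
        congrFun (congrArg Prod.snd hΦeq) ⟨k - 1, by omega⟩
      rwa [show (k - 1) + 1 = k by omega] at h2
    obtain ⟨hN, hδ, hL⟩ := hω
    have hN' := hstop n ω ω' hYeq hUeq hN
    refine ⟨hN', ?_, ?_⟩
    · rw [← hdet n ω ω' hYeq hUeq hN hN']
      exact hδ
    · rw [show jointP P q i n (fun k => Y k ω') (fun k => U k ω')
          = jointP P q i n (fun k => Y k ω) (fun k => U k ω) from
          jointP_congr P hq i n (fun k hk => (hYeq k hk).symm)
            (fun k h1 hk => (hUeq k h1 hk).symm),
        show jointP P q j n (fun k => Y k ω') (fun k => U k ω')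
          = jointP P q j n (fun k => Y k ω) (fun k => U k ω) from
          jointP_congr P hq j n (fun k hk => (hYeq k hk).symm)
            (fun k h1 hk => (hUeq k h1 hk).symm)]
      exact hL
  set Gfin : ∀ n : ℕ, Finset ((Fin (n+1) → Obs) × (Fin n → Ctl)) :=
    fun n => Finset.univ.filter (fun t => ∃ ω ∈ S n, Φ n ω = t) with hGdef
  have hSdecomp : ∀ n, S n = ⋃ t ∈ Gfin n, Φ n ⁻¹' {t} := by
    intro n
    ext ω'
    simp only [Set.mem_iUnion, hGdef, Finset.mem_filter, Finset.mem_univ, true_and,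
      Set.mem_preimage, Set.mem_singleton_iff]
    constructor
    · intro h
      exact ⟨Φ n ω', ⟨ω', h, rfl⟩, rfl⟩
    · rintro ⟨t, ⟨ω, hω, hΦω⟩, hΦω'⟩
      exact hfiber n ω ω' (hΦω.trans hΦω'.symm) hω
  have hSmeas : ∀ n, MeasurableSet (S n) := by
    intro n
    rw [hSdecomp n]
    exact (Gfin n).measurableSet_biUnion fun t _ => hmeasΦ n t
  have hsum : ∀ (m : Fin M) n, ℙ m (S n) = ∑ t ∈ Gfin n, ℙ m (Φ n ⁻¹' {t}) := by
    intro m n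
    rw [hSdecomp n]
    exact measure_biUnion_finset
      (fun t _ t' _ hne => (Set.disjoint_singleton.mpr hne).preimage _)
      (fun t _ => hmeasΦ n t)
  have hterm : ∀ n, ∀ t ∈ Gfin n,
      ℙ i (Φ n ⁻¹' {t}) ≤ ENNReal.ofReal K * ℙ j (Φ n ⁻¹' {t}) := by
    intro n t ht
    rw [hGdef, Finset.mem_filter] at ht
    obtain ⟨-, ω, hωS, hΦω⟩ := ht
    have ht0 : t.1 0 = y0 := by
      rw [← hΦω]
      simp only [hΦdef]
      rw [show ((0 : Fin (n+1)) : ℕ) = 0 from rfl]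
      exact hY0 ω
    rw [hmeasP i n t ht0, hmeasP j n t ht0]
    have hLa : Real.log (jointP P q i n (eY n t.1) (eU n t.2) /
        jointP P q j n (eY n t.1) (eU n t.2)) ≤ c := by
      obtain ⟨hag1, hag2⟩ := hagree n ω
      rw [hΦω] at hag1 hag2
      have h1 := jointP_congr P hq i n hag1 hag2
      have h2 := jointP_congr P hq j n hag1 hag2
      have hL := hωS.2.2
      rwa [h1, h2] at hL
    have ha0 : 0 ≤ jointP P q i n (eY n t.1) (eU n t.2) :=
      jointP_nonneg hP_pos hq i n _ _
    rcases eq_or_lt_of_le ha0 with h0 | h0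
    · rw [← h0]
      simp
    · have hbpos : 0 < jointP P q j n (eY n t.1) (eU n t.2) :=
        jointP_pos_transfer hP_pos hq i j n _ _ h0
      have hdiv : jointP P q i n (eY n t.1) (eU n t.2) /
          jointP P q j n (eY n t.1) (eU n t.2) ≤ K := by
        have h3 := Real.exp_le_exp.mpr hLa
        rwa [Real.exp_log (div_pos h0 hbpos)] at h3
      have hab : jointP P q i n (eY n t.1) (eU n t.2) ≤
          K * jointP P q j n (eY n t.1) (eU n t.2) := (div_le_iff₀ hbpos).mp hdiv
      calc ENNReal.ofReal (jointP P q i n (eY n t.1) (eU n t.2))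
          ≤ ENNReal.ofReal (K * jointP P q j n (eY n t.1) (eU n t.2)) :=
            ENNReal.ofReal_le_ofReal hab
        _ = ENNReal.ofReal K * ENNReal.ofReal (jointP P q j n (eY n t.1) (eU n t.2)) :=
            ENNReal.ofReal_mul (by rw [hKdef]; exact Real.exp_nonneg _)
  have hkey : ∀ n, ℙ i (S n) ≤ ENNReal.ofReal K * ℙ j (S n) := by
    intro n
    rw [hsum i n, hsum j n, Finset.mul_sum]
    exact Finset.sum_le_sum (hterm n)
  have hdisj : Pairwise (Function.onFun Disjoint S) := by
    intro n m hnm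
    refine Set.disjoint_left.mpr fun ω h1 h2 => hnm ?_
    have h3 := h1.1.symm.trans h2.1
    exact_mod_cast h3
  have hSub : {ω | ∃ m : ℕ, N ω = (m : ℕ∞) ∧
      Real.log (jointP P q i m (fun k => Y k ω) (fun k => U k ω)
          / jointP P q j m (fun k => Y k ω) (fun k => U k ω)) ≤ c}
      ⊆ (⋃ n, S n) ∪ {ω | δ ω ≠ i} := by
    rintro ω ⟨m, hm, hL⟩
    by_cases hδi : δ ω = i
    · exact Or.inl (Set.mem_iUnion.mpr ⟨m, hm, hδi, hL⟩)
    · exact Or.inr hδi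
  have hUS : (⋃ n, S n) ⊆ {ω' | δ ω' = i} := by
    intro ω hω
    obtain ⟨n, h⟩ := Set.mem_iUnion.mp hω
    exact h.2.1
  have hlogRα : Real.log R ≤ Real.log α := Real.log_le_log hRpos hRα
  have hlogα : Real.log α ≤ Real.log (η/2) / ε := by
    have h1 : α ≤ Real.exp (Real.log (η/2) / ε) := min_le_right _ _
    calc Real.log α ≤ Real.log (Real.exp (Real.log (η/2) / ε)) :=
          Real.log_le_log hα0 h1
      _ = Real.log (η/2) / ε := Real.log_exp _
  have hKR : K * R ≤ η / 2 := by
    rw [hKdef, hcdef]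
    calc Real.exp (-(1 - ε) * Real.log R) * R
        = Real.exp (-(1 - ε) * Real.log R) * Real.exp (Real.log R) := by
          rw [Real.exp_log hRpos]
      _ = Real.exp (ε * Real.log R) := by
          rw [← Real.exp_add]; congr 1; ring
      _ ≤ Real.exp (Real.log (η/2)) := by
          apply Real.exp_le_exp.mpr
          calc ε * Real.log R ≤ ε * Real.log α :=
                mul_le_mul_of_nonneg_left hlogRα hε0.le
            _ ≤ ε * (Real.log (η/2) / ε) :=
                mul_le_mul_of_nonneg_left hlogα hε0.le
            _ = Real.log (η/2) := by field_simp
      _ = η/2 := Real.exp_log hη2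
  calc ℙ i {ω | ∃ m : ℕ, N ω = (m : ℕ∞) ∧
        Real.log (jointP P q i m (fun k => Y k ω) (fun k => U k ω)
            / jointP P q j m (fun k => Y k ω) (fun k => U k ω)) ≤ c}
      ≤ ℙ i ((⋃ n, S n) ∪ {ω | δ ω ≠ i}) := measure_mono hSub
    _ ≤ ℙ i (⋃ n, S n) + ℙ i {ω | δ ω ≠ i} := measure_union_le _ _
    _ ≤ ENNReal.ofReal K * ℙ j (⋃ n, S n) + ENNReal.ofReal α := by
        refine add_le_add ?_ ?_
        · rw [measure_iUnion hdisj hSmeas, measure_iUnion hdisj hSmeas]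
          calc ∑' n, ℙ i (S n) ≤ ∑' n, ENNReal.ofReal K * ℙ j (S n) :=
                ENNReal.tsum_le_tsum hkey
            _ = ENNReal.ofReal K * ∑' n, ℙ j (S n) := ENNReal.tsum_mul_left
        · haveI := hprob i
          rw [← ENNReal.ofReal_toReal (measure_ne_top (ℙ i) {ω | δ ω ≠ i})]
          exact ENNReal.ofReal_le_ofReal (herr i)
    _ ≤ ENNReal.ofReal K * ENNReal.ofReal R + ENNReal.ofReal α :=
        add_le_add (mul_le_mul_right (le_trans (measure_mono hUS) hℙjR) _) le_rfl
    _ = ENNReal.ofReal (K * R) + ENNReal.ofReal α := by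
        rw [ENNReal.ofReal_mul (by rw [hKdef]; exact Real.exp_nonneg _)]
    _ ≤ ENNReal.ofReal (η/2) + ENNReal.ofReal (η/2) :=
        add_le_add (ENNReal.ofReal_le_ofReal hKR)
          (ENNReal.ofReal_le_ofReal (min_le_left _ _))
    _ = ENNReal.ofReal η := by
        rw [← ENNReal.ofReal_add (by linarith) (by linarith)]
        norm_num
end

section
/- In the controlled Markovian observation model with cost function c, for every hypothesis i and every ε > 0 there exists η > 0 such that every pmf t on 𝒴 × 𝒰 satisfying |Σ_u t(y, u) − Σ_{ỹ,u} t(ỹ, u) p_i^u(y|ỹ)| ≤ η for every y ∈ 𝒴 also satisfies [min_{j≠i} Σ_{ỹ,u} t(ỹ, u) D(p_i^u(·|ỹ) ‖ p_j^u(·|ỹ))] / [Σ_{ỹ,u} t(ỹ, u) c(u)] < d_i*(c) + ε. -/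
open MeasureTheory
open scoped ENNReal

/-- The coefficient `d_i*(c)`: maximum over stationary conditional pmfs
`q(·|·)` of the ratio of `min_{j ≠ i} Σ_{ỹ,u} μ_i^q(ỹ) q(u|ỹ)
D(p_i^u(·|ỹ) ‖ p_j^u(·|ỹ))` to the average control cost
`Σ_{ỹ,u} μ_i^q(ỹ) q(u|ỹ) c(u)`, where `μ_i^q` is the stationary pmf of the
induced Markov chain. -/
noncomputable def dstarC {Obs Ctl : Type*} [Fintype Obs] [Fintype Ctl] {M : ℕ}
    (P : Fin M → Ctl → Obs → Obs → ℝ) (c : Ctl → ℝ) (i : Fin M) : ℝ :=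
  sSup {r : ℝ | ∃ (qc : Obs → Ctl → ℝ) (μ : Obs → ℝ),
    (∀ ytil u, 0 ≤ qc ytil u) ∧ (∀ ytil, ∑ u, qc ytil u = 1) ∧
    (∀ ytil, 0 ≤ μ ytil) ∧ (∑ ytil, μ ytil = 1) ∧
    (∀ y, μ y = ∑ ytil, μ ytil * ∑ u, qc ytil u * P i u ytil y) ∧
    r = (sInf {x : ℝ | ∃ j, j ≠ i ∧
          x = ∑ ytil, ∑ u, μ ytil * qc ytil u *
            ∑ y, P i u ytil y * Real.log (P i u ytil y / P j u ytil y)})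
        / (∑ ytil, ∑ u, μ ytil * qc ytil u * c u)}

/-!
On the compact simplex of pmfs on `Obs × Ctl` the mean cost is bounded away from zero, so the
cost-normalized reward is continuous there. An exactly stationary pmf `t` disintegrates as
`t(ỹ,u) = μ(ỹ) q(u|ỹ)` with `μ` stationary for `p_i^q`, so its reward is at most `d_i*(c)`.
Hence the compact set of pmfs whose reward is at least `d_i*(c) + ε` contains no stationary pmf,
and the (continuous) stationarity defect has a positive minimum on it.
-/

theorem IsCompact.exists_pos_forall_lt_of_norm_le {X E : Type*} [TopologicalSpace X]
    [NormedAddGroup E] {K : Set X} (hK : IsCompact K) {f : X → E} {F : X → ℝ} {a : ℝ}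
    (hf : ContinuousOn f K) (hF : ContinuousOn F K) (h : ∀ x ∈ K, f x = 0 → F x < a) :
    ∃ η > 0, ∀ x ∈ K, ‖f x‖ ≤ η → F x < a := by
  have hbad : IsCompact (K ∩ F ⁻¹' Set.Ici a) :=
    hF.upperSemicontinuousOn.isCompact_inter_preimage_Ici hK a
  obtain ⟨η, hη, hle⟩ := hbad.exists_forall_le' (hf.norm.mono Set.inter_subset_left)
    fun x hx => norm_pos_iff.2 fun h0 => (h x hx.1 h0).not_ge hx.2
  refine ⟨η / 2, half_pos hη, fun x hx hfx => lt_of_not_ge fun hFx => ?_⟩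
  linarith [hle x ⟨hx, hFx⟩]

theorem continuous_sInf_setOf_exists_eq {X ι : Type*} [TopologicalSpace X] [Finite ι]
    (p : ι → Prop) {φ : ι → X → ℝ} (hφ : ∀ j, Continuous (φ j)) :
    Continuous fun x => sInf {r | ∃ j, p j ∧ r = φ j x} := by
  classical
  have := Fintype.ofFinite ι
  by_cases hp : ∃ j, p j
  · have hs : (Finset.univ.filter p).Nonempty := by simpa [Finset.filter_nonempty_iff] using hp
    have heq : ∀ x, sInf {r | ∃ j, p j ∧ r = φ j x} = (Finset.univ.filter p).inf' hs (φ · x) := by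
      intro x
      rw [Finset.inf'_eq_csInf_image]
      congr 1
      ext r
      simp [eq_comm]
    simp_rw [heq]
    exact Continuous.finset_inf'_apply hs fun j _ => hφ j
  · simp only [not_exists] at hp
    simpa [hp] using continuous_const

theorem exists_pmf_mul_eq {β : Type*} [Fintype β] [Nonempty β] (s : β → ℝ) (hs : ∀ b, 0 ≤ s b) :
    ∃ q : β → ℝ, (∀ b, 0 ≤ q b) ∧ ∑ b, q b = 1 ∧ ∀ b, s b = (∑ b', s b') * q b := by
  by_cases h : ∑ b, s b = 0
  · refine ⟨fun _ => (Fintype.card β : ℝ)⁻¹, fun _ => by positivity, ?_, fun b => ?_⟩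
    · simp
    · rw [h, zero_mul]
      exact (Finset.sum_eq_zero_iff_of_nonneg fun b _ => hs b).1 h b (Finset.mem_univ b)
  · have hsum : 0 ≤ ∑ b, s b := Finset.sum_nonneg fun b _ => hs b
    exact ⟨fun b => s b / ∑ b', s b', fun b => div_nonneg (hs b) hsum,
      by rw [← Finset.sum_div, div_self h], fun b => by field_simp⟩

def jointSimplex (α β : Type*) [Fintype α] [Fintype β] : Set (α → β → ℝ) :=
  {t | (∀ a b, 0 ≤ t a b) ∧ ∑ a, ∑ b, t a b = 1}

theorem jointSimplex_eq_preimage (α β : Type*) [Fintype α] [Fintype β] :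
    jointSimplex α β = Function.uncurry ⁻¹' stdSimplex ℝ (α × β) := by
  ext t
  simp [jointSimplex, stdSimplex, Fintype.sum_prod_type]

theorem isCompact_jointSimplex (α β : Type*) [Fintype α] [Fintype β] :
    IsCompact (jointSimplex α β) := by
  rw [jointSimplex_eq_preimage]
  exact (Homeomorph.piCurry.symm.isCompact_preimage).2 (isCompact_stdSimplex ℝ _)

theorem mul_mem_jointSimplex {α β : Type*} [Fintype α] [Fintype β] {μ : α → ℝ} {q : α → β → ℝ}
    (hμ0 : ∀ a, 0 ≤ μ a) (hμ1 : ∑ a, μ a = 1) (hq0 : ∀ a b, 0 ≤ q a b)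
    (hq1 : ∀ a, ∑ b, q a b = 1) : (fun a b => μ a * q a b) ∈ jointSimplex α β :=
  ⟨fun a b => mul_nonneg (hμ0 a) (hq0 a b), by simp [← Finset.mul_sum, hq1, hμ1]⟩

noncomputable section ControlledMarkov

variable {Obs Ctl : Type*} [Fintype Obs] [Fintype Ctl] {M : ℕ}
  (P : Fin M → Ctl → Obs → Obs → ℝ) (c : Ctl → ℝ) (i : Fin M)

def klRate (j : Fin M) (t : Obs → Ctl → ℝ) : ℝ :=
  ∑ ytil, ∑ u, t ytil u * ∑ y, P i u ytil y * Real.log (P i u ytil y / P j u ytil y)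

def meanCost (t : Obs → Ctl → ℝ) : ℝ :=
  ∑ ytil, ∑ u, t ytil u * c u

def rewardRatio (t : Obs → Ctl → ℝ) : ℝ :=
  sInf {x | ∃ j, j ≠ i ∧ x = klRate P i j t} / meanCost c t

def stationarityDefect (t : Obs → Ctl → ℝ) : Obs → ℝ :=
  fun y => (∑ u, t y u) - ∑ ytil, ∑ u, t ytil u * P i u ytil y

theorem continuous_klRate (j : Fin M) : Continuous (klRate P i j : (Obs → Ctl → ℝ) → ℝ) := by
  unfold klRate; fun_prop

theorem continuous_meanCost : Continuous (meanCost c : (Obs → Ctl → ℝ) → ℝ) := by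
  unfold meanCost; fun_prop

theorem continuous_stationarityDefect :
    Continuous (stationarityDefect P i : (Obs → Ctl → ℝ) → Obs → ℝ) := by
  unfold stationarityDefect; fun_prop

variable {c}

theorem meanCost_pos (hc : ∀ u, 0 < c u) {t : Obs → Ctl → ℝ} (ht : t ∈ jointSimplex Obs Ctl) :
    0 < meanCost c t := by
  obtain ⟨y, -, hy⟩ := Finset.exists_ne_zero_of_sum_ne_zero (ht.2 ▸ one_ne_zero)
  obtain ⟨u, -, hu⟩ := Finset.exists_ne_zero_of_sum_ne_zero hy
  have hnonneg : ∀ y u, 0 ≤ t y u * c u := fun y u => mul_nonneg (ht.1 y u) (hc u).le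
  refine Finset.sum_pos' (fun y _ => Finset.sum_nonneg fun u _ => hnonneg y u)
    ⟨y, Finset.mem_univ y, Finset.sum_pos' (fun u _ => hnonneg y u) ⟨u, Finset.mem_univ u, ?_⟩⟩
  exact mul_pos ((ht.1 y u).lt_of_ne' hu) (hc u)

theorem continuousOn_rewardRatio (hc : ∀ u, 0 < c u) :
    ContinuousOn (rewardRatio P c i) (jointSimplex Obs Ctl) :=
  (continuous_sInf_setOf_exists_eq (· ≠ i) (continuous_klRate P i)).continuousOn.div
    (continuous_meanCost c).continuousOn fun _ ht => (meanCost_pos hc ht).ne'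

variable [Nonempty Ctl]

theorem rewardRatio_le_dstarC (hc : ∀ u, 0 < c u) {t : Obs → Ctl → ℝ}
    (ht : t ∈ jointSimplex Obs Ctl) (hstat : stationarityDefect P i t = 0) :
    rewardRatio P c i t ≤ dstarC P c i := by
  choose q hq0 hq1 hqt using fun y => exists_pmf_mul_eq (t y) (ht.1 y)
  set μ : Obs → ℝ := fun y => ∑ u, t y u
  have hμ0 : ∀ y, 0 ≤ μ y := fun y => Finset.sum_nonneg fun u _ => ht.1 y u
  have hμq : t = fun y u => μ y * q y u := funext fun y => funext (hqt y)
  have hμ_stat : ∀ y, μ y = ∑ ytil, μ ytil * ∑ u, q ytil u * P i u ytil y := by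
    intro y
    calc μ y = ∑ ytil, ∑ u, t ytil u * P i u ytil y := sub_eq_zero.1 (congrFun hstat y)
      _ = _ := by rw [hμq]; simp only [Finset.mul_sum, mul_assoc]
  refine le_csSup ?_ ⟨q, μ, hq0, hq1, hμ0, ht.2, hμ_stat, by rw [hμq]; rfl⟩
  refine ((isCompact_jointSimplex Obs Ctl).image_of_continuousOn
    (continuousOn_rewardRatio P i hc)).bddAbove.mono ?_
  rintro r ⟨q', μ', hq'0, hq'1, hμ'0, hμ'1, -, rfl⟩
  exact ⟨_, mul_mem_jointSimplex hμ'0 hμ'1 hq'0 hq'1, rfl⟩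

end ControlledMarkov

theorem stmt_17_general {Obs Ctl : Type*} [Fintype Obs] [Fintype Ctl]
    [Nonempty Ctl]
    {M : ℕ}
    (P : Fin M → Ctl → Obs → Obs → ℝ)
    (c : Ctl → ℝ) (hc : ∀ u, 0 < c u)
    (i : Fin M) (ε : ℝ) (hε : 0 < ε) :
    ∃ η > (0 : ℝ), ∀ t : Obs → Ctl → ℝ,
      (∀ ytil u, 0 ≤ t ytil u) → (∑ ytil, ∑ u, t ytil u = 1) →
      (∀ y, |(∑ u, t y u) - ∑ ytil, ∑ u, t ytil u * P i u ytil y| ≤ η) →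
      (sInf {x : ℝ | ∃ j, j ≠ i ∧
          x = ∑ ytil, ∑ u, t ytil u *
            ∑ y, P i u ytil y * Real.log (P i u ytil y / P j u ytil y)})
        / (∑ ytil, ∑ u, t ytil u * c u)
      < dstarC P c i + ε := by
  obtain ⟨η, hη, hlt⟩ := (isCompact_jointSimplex Obs Ctl).exists_pos_forall_lt_of_norm_le
    (continuous_stationarityDefect P i).continuousOn (continuousOn_rewardRatio P i hc)
    fun t ht hstat => (rewardRatio_le_dstarC P i hc ht hstat).trans_lt (lt_add_of_pos_right _ hε)
  refine ⟨η, hη, fun t ht0 ht1 hdefect => hlt t ⟨ht0, ht1⟩ ?_⟩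
  exact (pi_norm_le_iff_of_nonneg hη.le).2 fun y => (Real.norm_eq_abs _).trans_le (hdefect y)

/-- **Continuity of the cost-normalized inferential reward near the optimal
occupation measures**: in the controlled Markovian observation model with cost
function `c`, for every hypothesis `i` and `ε > 0` there is `η > 0` such that
every pmf `t` on `Obs × Ctl` which is `η`-approximately stationary for the
kernel `p_i` satisfies
`[min_{j≠i} Σ_{ỹ,u} t(ỹ,u) D(p_i^u(·|ỹ) ‖ p_j^u(·|ỹ))] /
 [Σ_{ỹ,u} t(ỹ,u) c(u)] < d_i*(c) + ε`. -/
theorem stmt_17 {Obs Ctl : Type*} [Fintype Obs] [Fintype Ctl]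
    [Nonempty Obs] [Nonempty Ctl]
    {M : ℕ} (hM : 2 ≤ M)
    (P : Fin M → Ctl → Obs → Obs → ℝ)
    (hP_pos : ∀ i u ytil y, 0 < P i u ytil y)
    (hP_sum : ∀ i u ytil, ∑ y, P i u ytil y = 1)
    (c : Ctl → ℝ) (hc : ∀ u, 0 < c u)
    (i : Fin M) (ε : ℝ) (hε : 0 < ε) :
    ∃ η > (0 : ℝ), ∀ t : Obs → Ctl → ℝ,
      (∀ ytil u, 0 ≤ t ytil u) → (∑ ytil, ∑ u, t ytil u = 1) →
      (∀ y, |(∑ u, t y u) - ∑ ytil, ∑ u, t ytil u * P i u ytil y| ≤ η) →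
      (sInf {x : ℝ | ∃ j, j ≠ i ∧
          x = ∑ ytil, ∑ u, t ytil u *
            ∑ y, P i u ytil y * Real.log (P i u ytil y / P j u ytil y)})
        / (∑ ytil, ∑ u, t ytil u * c u)
      < dstarC P c i + ε :=
  stmt_17_general P c hc i ε hε
end

section
/- In the controlled Markovian observation model, for every η > 0 there exist constants C > 0 and b > 0, depending only on the kernels and η (not on the control policy), such that for every hypothesis i, every causal control policy φ and every n ≥ 1, ℙ_i{ there exists y ∈ 𝒴 with | (1/n) Σ_{k=1}^n 1{Y_k = y} − Σ_{ỹ∈𝒴, u∈𝒰} T_n(ỹ, u) p_i^u(y|ỹ) | > η } ≤ C e^{−bn}, where T_n(ỹ, u) = (1/n) Σ_{k=1}^n 1{Y_{k−1} = ỹ, U_k = u} is the joint empirical distribution of (previous observation, control). -/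
open MeasureTheory
open scoped ENNReal

set_option linter.unusedSectionVars false

namespace Stmt18Aux

/-- extension of a finite trajectory to ℕ -/
def ext {α : Type*} (d : α) (n : ℕ) (f : Fin n → α) : ℕ → α :=
  fun k => if h : 1 ≤ k ∧ k ≤ n then f ⟨k - 1, by omega⟩ else d

lemma ext_zero {α : Type*} (d : α) (n : ℕ) (f : Fin n → α) : ext d n f 0 = d := by
  simp [ext]

lemma ext_snoc_of_le {α : Type*} (d : α) {n : ℕ} (f : Fin n → α) (a : α) {m : ℕ}
    (hm : m ≤ n) : ext d (n + 1) (Fin.snoc f a) m = ext d n f m := by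
  unfold ext
  by_cases h : 1 ≤ m ∧ m ≤ n
  · rw [dif_pos ⟨h.1, by omega⟩, dif_pos h]
    have e : (⟨m - 1, by omega⟩ : Fin (n + 1)) = Fin.castSucc ⟨m - 1, by omega⟩ := rfl
    rw [e, Fin.snoc_castSucc]
  · rw [dif_neg (by omega), dif_neg h]

lemma ext_snoc_top {α : Type*} (d : α) {n : ℕ} (f : Fin n → α) (a : α) :
    ext d (n + 1) (Fin.snoc f a) (n + 1) = a := by
  unfold ext
  rw [dif_pos ⟨by omega, le_refl _⟩]
  have e : (⟨n + 1 - 1, by omega⟩ : Fin (n + 1)) = Fin.last n := by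
    ext; simp
  rw [e, Fin.snoc_last]

lemma sum_snoc {α : Type*} [Fintype α] {β : Type*} [AddCommMonoid β] (n : ℕ)
    (φ : (Fin (n + 1) → α) → β) :
    ∑ F : Fin (n + 1) → α, φ F = ∑ f : Fin n → α, ∑ a : α, φ (Fin.snoc f a) := by
  have hbij : Function.Bijective
      (fun fa : (Fin n → α) × α => (Fin.snoc fa.1 fa.2 : Fin (n + 1) → α)) := by
    constructor
    · rintro ⟨f, a⟩ ⟨f', a'⟩ h
      simp only at h
      have h1 : f = f' := by
        funext j
        have := congrFun h (Fin.castSucc j)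
        simpa using this
      have h2 : a = a' := by
        have := congrFun h (Fin.last n)
        simpa using this
      simp [h1, h2]
    · intro F
      refine ⟨⟨fun j => F (Fin.castSucc j), F (Fin.last n)⟩, ?_⟩
      exact Fin.snoc_init_self F
  have := Fintype.sum_bijective _ hbij
      (fun fa : (Fin n → α) × α => φ (Fin.snoc fa.1 fa.2)) φ (fun _ => rfl)
  rw [← this, Fintype.sum_prod_type]



lemma exp_mul_le (l x : ℝ) (h1 : -1 ≤ x) (h2 : x ≤ 1) :
    Real.exp (l * x) ≤ Real.cosh l + x * Real.sinh l := by
  have h := convexOn_exp.2 (Set.mem_univ l) (Set.mem_univ (-l))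
      (show (0:ℝ) ≤ (1 + x) / 2 by linarith) (show (0:ℝ) ≤ (1 - x) / 2 by linarith)
      (show (1 + x) / 2 + (1 - x) / 2 = 1 by ring)
  simp only [smul_eq_mul] at h
  have e1 : (1 + x) / 2 * l + (1 - x) / 2 * -l = l * x := by ring
  rw [e1] at h
  rw [Real.cosh_eq, Real.sinh_eq]
  calc Real.exp (l * x) ≤ (1 + x) / 2 * Real.exp l + (1 - x) / 2 * Real.exp (-l) := h
    _ = (Real.exp l + Real.exp (-l)) / 2 + x * ((Real.exp l - Real.exp (-l)) / 2) := by ring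

lemma step_bound {Obs : Type*} [Fintype Obs] [DecidableEq Obs]
    (p : Obs → ℝ) (hp0 : ∀ a, 0 ≤ p a) (hp1 : ∑ a, p a = 1) (y : Obs) (l : ℝ) :
    ∑ a, p a * Real.exp (l * ((if a = y then (1 : ℝ) else 0) - p y)) ≤ Real.cosh l := by
  have hpy1 : p y ≤ 1 := by
    rw [← hp1]
    exact Finset.single_le_sum (fun a _ => hp0 a) (Finset.mem_univ y)
  have hbd : ∀ a, p a * Real.exp (l * ((if a = y then (1 : ℝ) else 0) - p y))
      ≤ p a * (Real.cosh l + ((if a = y then (1 : ℝ) else 0) - p y) * Real.sinh l) := by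
    intro a
    refine mul_le_mul_of_nonneg_left ?_ (hp0 a)
    refine exp_mul_le l _ ?_ ?_
    · split_ifs <;> [linarith [hp0 y]; linarith [hp0 y]]
    · split_ifs <;> [linarith [hp0 y]; linarith [hp0 y]]
  calc ∑ a, p a * Real.exp (l * ((if a = y then (1 : ℝ) else 0) - p y))
      ≤ ∑ a, p a * (Real.cosh l + ((if a = y then (1 : ℝ) else 0) - p y) * Real.sinh l) :=
        Finset.sum_le_sum fun a _ => hbd a
    _ = (∑ a, p a) * Real.cosh l
        + (∑ a, p a * ((if a = y then (1 : ℝ) else 0) - p y)) * Real.sinh l := by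
        rw [Finset.sum_mul, Finset.sum_mul, ← Finset.sum_add_distrib]
        exact Finset.sum_congr rfl fun a _ => by ring
    _ = Real.cosh l := by
        have hd : (∑ a, p a * ((if a = y then (1 : ℝ) else 0) - p y)) = 0 := by
          have e : ∀ a : Obs, p a * ((if a = y then (1 : ℝ) else 0) - p y)
              = p a * (if a = y then (1 : ℝ) else 0) - p a * p y := fun a => by ring
          rw [Finset.sum_congr rfl fun a _ => e a, Finset.sum_sub_distrib, ← Finset.sum_mul, hp1]
          simp [mul_ite]
        rw [hd, hp1]; ring


variable {Obs Ctl : Type*} [Fintype Obs] [Fintype Ctl] [DecidableEq Obs] [DecidableEq Ctl]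
  {M : ℕ}

/-- partial sum of centered indicators -/
noncomputable def S (P : Fin M → Ctl → Obs → Obs → ℝ) (i : Fin M) (y : Obs) (n : ℕ)
    (ys : ℕ → Obs) (us : ℕ → Ctl) : ℝ :=
  ∑ k ∈ Finset.Icc 1 n, ((if ys k = y then (1 : ℝ) else 0) - P i (us k) (ys (k - 1)) y)

lemma jointP_nonneg (P : Fin M → Ctl → Obs → Obs → ℝ)
    (hP : ∀ i u y' y, 0 ≤ P i u y' y) (q : ℕ → (ℕ → Obs) → (ℕ → Ctl) → Ctl → ℝ)
    (hq : IsPolicy q) (i : Fin M) (n : ℕ) (ys : ℕ → Obs) (us : ℕ → Ctl) :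
    0 ≤ jointP P q i n ys us :=
  Finset.prod_nonneg fun _ _ => mul_nonneg (hq.1 _ _ _ _) (hP _ _ _ _)

lemma jointP_snoc (P : Fin M → Ctl → Obs → Obs → ℝ)
    (q : ℕ → (ℕ → Obs) → (ℕ → Ctl) → Ctl → ℝ) (hq : IsPolicy q) (i : Fin M)
    (y0 : Obs) (u0 : Ctl) (n : ℕ) (f : Fin n → Obs) (g : Fin n → Ctl) (a : Obs) (c : Ctl) :
    jointP P q i (n + 1) (ext y0 (n + 1) (Fin.snoc f a)) (ext u0 (n + 1) (Fin.snoc g c)) =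
    jointP P q i n (ext y0 n f) (ext u0 n g) *
      (q (n + 1) (ext y0 n f) (ext u0 n g) c * P i c (ext y0 n f n) a) := by
  unfold jointP
  rw [Finset.prod_Icc_succ_top (by omega : (1 : ℕ) ≤ n + 1)]
  have hys : ∀ m, m ≤ n → ext y0 (n + 1) (Fin.snoc f a) m = ext y0 n f m :=
    fun m hm => ext_snoc_of_le _ _ _ hm
  have hus : ∀ m, m ≤ n → ext u0 (n + 1) (Fin.snoc g c) m = ext u0 n g m :=
    fun m hm => ext_snoc_of_le _ _ _ hm
  congr 1
  · refine Finset.prod_congr rfl fun k hk => ?_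
    obtain ⟨hk1, hk2⟩ := Finset.mem_Icc.mp hk
    have hq' : q k (ext y0 (n + 1) (Fin.snoc f a)) (ext u0 (n + 1) (Fin.snoc g c))
        = q k (ext y0 n f) (ext u0 n g) :=
      hq.2.2 k _ _ _ _ (fun m hm => hys m (by omega)) (fun m _ hm => hus m (by omega))
    rw [hq', hys k hk2, hys (k - 1) (by omega), hus k hk2]
  · have hq' : q (n + 1) (ext y0 (n + 1) (Fin.snoc f a)) (ext u0 (n + 1) (Fin.snoc g c))
        = q (n + 1) (ext y0 n f) (ext u0 n g) :=
      hq.2.2 (n + 1) _ _ _ _ (fun m hm => hys m (by omega)) (fun m _ hm => hus m (by omega))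
    rw [hq', ext_snoc_top, ext_snoc_top, show n + 1 - 1 = n from rfl, hys n le_rfl]

lemma S_snoc (P : Fin M → Ctl → Obs → Obs → ℝ) (i : Fin M) (y : Obs)
    (y0 : Obs) (u0 : Ctl) (n : ℕ) (f : Fin n → Obs) (g : Fin n → Ctl) (a : Obs) (c : Ctl) :
    S P i y (n + 1) (ext y0 (n + 1) (Fin.snoc f a)) (ext u0 (n + 1) (Fin.snoc g c)) =
    S P i y n (ext y0 n f) (ext u0 n g)
      + ((if a = y then (1 : ℝ) else 0) - P i c (ext y0 n f n) y) := by
  unfold S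
  rw [Finset.sum_Icc_succ_top (by omega : (1 : ℕ) ≤ n + 1)]
  congr 1
  · refine Finset.sum_congr rfl fun k hk => ?_
    obtain ⟨hk1, hk2⟩ := Finset.mem_Icc.mp hk
    rw [ext_snoc_of_le _ _ _ hk2, ext_snoc_of_le _ _ _ (by omega : k - 1 ≤ n),
      ext_snoc_of_le _ _ _ hk2]
  · rw [ext_snoc_top, ext_snoc_top, show n + 1 - 1 = n from rfl,
      ext_snoc_of_le _ _ _ le_rfl]


lemma mgf_le (P : Fin M → Ctl → Obs → Obs → ℝ)
    (hP0 : ∀ i u y' y, 0 ≤ P i u y' y) (hP1 : ∀ i u y', ∑ y, P i u y' y = 1)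
    (q : ℕ → (ℕ → Obs) → (ℕ → Ctl) → Ctl → ℝ) (hq : IsPolicy q) (i : Fin M)
    (y0 : Obs) (u0 : Ctl) (y : Obs) (l : ℝ) :
    ∀ n : ℕ, ∑ f : Fin n → Obs, ∑ g : Fin n → Ctl,
      jointP P q i n (ext y0 n f) (ext u0 n g) *
        Real.exp (l * S P i y n (ext y0 n f) (ext u0 n g)) ≤ Real.cosh l ^ n := by
  intro n
  induction n with
  | zero =>
    simp [jointP, S]
  | succ n ih =>
    set T : (Fin (n + 1) → Obs) → (Fin (n + 1) → Ctl) → ℝ := fun F G =>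
      jointP P q i (n + 1) (ext y0 (n + 1) F) (ext u0 (n + 1) G) *
        Real.exp (l * S P i y (n + 1) (ext y0 (n + 1) F) (ext u0 (n + 1) G)) with hT
    have hstep : ∀ (f : Fin n → Obs) (g : Fin n → Ctl),
        ∑ c : Ctl, ∑ a : Obs, T (Fin.snoc f a) (Fin.snoc g c)
          ≤ (jointP P q i n (ext y0 n f) (ext u0 n g) *
              Real.exp (l * S P i y n (ext y0 n f) (ext u0 n g))) * Real.cosh l := by
      intro f g
      set W := jointP P q i n (ext y0 n f) (ext u0 n g) with hW
      set E := Real.exp (l * S P i y n (ext y0 n f) (ext u0 n g)) with hE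
      have hWE : 0 ≤ W * E := mul_nonneg (jointP_nonneg P hP0 q hq i n _ _) (Real.exp_pos _).le
      have h1 : ∀ c : Ctl,
          ∑ a : Obs, P i c (ext y0 n f n) a *
            Real.exp (l * ((if a = y then (1 : ℝ) else 0) - P i c (ext y0 n f n) y))
            ≤ Real.cosh l :=
        fun c => step_bound (P i c (ext y0 n f n)) (fun a => hP0 _ _ _ _) (hP1 _ _ _) y l
      calc ∑ c : Ctl, ∑ a : Obs, T (Fin.snoc f a) (Fin.snoc g c)
          = ∑ c : Ctl, (W * E) * (q (n + 1) (ext y0 n f) (ext u0 n g) c *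
              ∑ a : Obs, P i c (ext y0 n f n) a *
                Real.exp (l * ((if a = y then (1 : ℝ) else 0) - P i c (ext y0 n f n) y))) := by
            refine Finset.sum_congr rfl fun c _ => ?_
            rw [Finset.mul_sum, Finset.mul_sum]
            refine Finset.sum_congr rfl fun a _ => ?_
            rw [hT]
            simp only
            rw [jointP_snoc P q hq i y0 u0 n f g a c, S_snoc P i y y0 u0 n f g a c,
              mul_add, Real.exp_add, ← hW, ← hE]
            ring
        _ ≤ ∑ c : Ctl, (W * E) * (q (n + 1) (ext y0 n f) (ext u0 n g) c * Real.cosh l) := by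
            refine Finset.sum_le_sum fun c _ => ?_
            exact mul_le_mul_of_nonneg_left
              (mul_le_mul_of_nonneg_left (h1 c) (hq.1 _ _ _ _)) hWE
        _ = (W * E) * Real.cosh l := by
            rw [← Finset.mul_sum]
            have : ∑ c : Ctl, q (n + 1) (ext y0 n f) (ext u0 n g) c * Real.cosh l
                = Real.cosh l := by
              rw [← Finset.sum_mul, hq.2.1, one_mul]
            rw [this]
    calc ∑ F : Fin (n + 1) → Obs, ∑ G : Fin (n + 1) → Ctl, T F G
        = ∑ f : Fin n → Obs, ∑ g : Fin n → Ctl, ∑ c : Ctl, ∑ a : Obs,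
            T (Fin.snoc f a) (Fin.snoc g c) := by
          rw [sum_snoc n (fun F => ∑ G : Fin (n + 1) → Ctl, T F G)]
          refine Finset.sum_congr rfl fun f _ => ?_
          rw [Finset.sum_comm]
          rw [sum_snoc n (fun G => ∑ a : Obs, T (Fin.snoc f a) G)]
      _ ≤ ∑ f : Fin n → Obs, ∑ g : Fin n → Ctl,
            (jointP P q i n (ext y0 n f) (ext u0 n g) *
              Real.exp (l * S P i y n (ext y0 n f) (ext u0 n g))) * Real.cosh l :=
          Finset.sum_le_sum fun f _ => Finset.sum_le_sum fun g _ => hstep f g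
      _ = (∑ f : Fin n → Obs, ∑ g : Fin n → Ctl,
            jointP P q i n (ext y0 n f) (ext u0 n g) *
              Real.exp (l * S P i y n (ext y0 n f) (ext u0 n g))) * Real.cosh l := by
          rw [Finset.sum_mul]
          exact Finset.sum_congr rfl fun f _ => by rw [Finset.sum_mul]
      _ ≤ Real.cosh l ^ n * Real.cosh l :=
          mul_le_mul_of_nonneg_right ih (Real.cosh_pos l).le
      _ = Real.cosh l ^ (n + 1) := (pow_succ _ _).symm


lemma sum_bad_le (P : Fin M → Ctl → Obs → Obs → ℝ)
    (hP0 : ∀ i u y' y, 0 ≤ P i u y' y) (hP1 : ∀ i u y', ∑ y, P i u y' y = 1)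
    (q : ℕ → (ℕ → Obs) → (ℕ → Ctl) → Ctl → ℝ) (hq : IsPolicy q) (i : Fin M)
    (y0 : Obs) (u0 : Ctl) (η : ℝ) (hη : 0 < η) (n : ℕ)
    [DecidablePred fun fg : (Fin n → Obs) × (Fin n → Ctl) =>
      ∃ y : Obs, η * n < |S P i y n (ext y0 n fg.1) (ext u0 n fg.2)|] :
    ∑ fg : (Fin n → Obs) × (Fin n → Ctl),
      (if ∃ y : Obs, η * n < |S P i y n (ext y0 n fg.1) (ext u0 n fg.2)| then
        jointP P q i n (ext y0 n fg.1) (ext u0 n fg.2) else 0)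
    ≤ (2 * (Fintype.card Obs : ℝ)) * Real.exp (-(η ^ 2 / 2 * n)) := by
  set W : (Fin n → Obs) × (Fin n → Ctl) → ℝ :=
    fun fg => jointP P q i n (ext y0 n fg.1) (ext u0 n fg.2) with hWdef
  set Sy : Obs → (Fin n → Obs) × (Fin n → Ctl) → ℝ :=
    fun y fg => S P i y n (ext y0 n fg.1) (ext u0 n fg.2) with hSdef
  have hWpos : ∀ fg, 0 ≤ W fg := fun fg => jointP_nonneg P hP0 q hq i n _ _
  set G : (Fin n → Obs) × (Fin n → Ctl) → ℝ := fun fg =>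
    ∑ y : Obs, (Real.exp (η * Sy y fg + -(η * η * n))
      + Real.exp (-η * Sy y fg + -(η * η * n))) with hGdef
  have hGnn : ∀ fg, 0 ≤ G fg := fun fg => Finset.sum_nonneg fun y _ => by positivity
  have hG1 : ∀ fg, (∃ y : Obs, η * n < |Sy y fg|) → 1 ≤ G fg := by
    rintro fg ⟨y, hy⟩
    have hn0 : (0:ℝ) ≤ (n : ℝ) := Nat.cast_nonneg n
    have hterm : (1:ℝ) ≤ Real.exp (η * Sy y fg + -(η * η * n))
        + Real.exp (-η * Sy y fg + -(η * η * n)) := by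
      rcases lt_abs.mp hy with h | h
      · have h0 : (0:ℝ) ≤ η * Sy y fg + -(η * η * n) := by nlinarith
        have h1 := Real.one_le_exp h0
        have h2 := (Real.exp_pos (-η * Sy y fg + -(η * η * n))).le
        linarith
      · have h0 : (0:ℝ) ≤ -η * Sy y fg + -(η * η * n) := by nlinarith
        have h1 := Real.one_le_exp h0
        have h2 := (Real.exp_pos (η * Sy y fg + -(η * η * n))).le
        linarith
    calc (1:ℝ) ≤ _ := hterm
      _ ≤ G fg := Finset.single_le_sum
          (f := fun y => Real.exp (η * Sy y fg + -(η * η * n))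
            + Real.exp (-η * Sy y fg + -(η * η * n)))
          (fun y _ => by positivity) (Finset.mem_univ y)
  have hmgf : ∀ (y : Obs) (l' : ℝ),
      ∑ fg : (Fin n → Obs) × (Fin n → Ctl), W fg * Real.exp (l' * Sy y fg)
        ≤ Real.cosh l' ^ n := by
    intro y l'
    rw [Fintype.sum_prod_type]
    exact mgf_le P hP0 hP1 q hq i y0 u0 y l' n
  have hcoshpow : Real.cosh η ^ n ≤ Real.exp (η ^ 2 / 2 * n) := by
    calc Real.cosh η ^ n ≤ Real.exp (η ^ 2 / 2) ^ n :=
          pow_le_pow_left₀ (Real.cosh_pos η).le (Real.cosh_le_exp_half_sq η) n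
      _ = Real.exp (η ^ 2 / 2 * n) := by
          rw [← Real.exp_nat_mul]; ring_nf
  calc ∑ fg : (Fin n → Obs) × (Fin n → Ctl),
        (if ∃ y : Obs, η * n < |S P i y n (ext y0 n fg.1) (ext u0 n fg.2)| then
          jointP P q i n (ext y0 n fg.1) (ext u0 n fg.2) else 0)
      ≤ ∑ fg : (Fin n → Obs) × (Fin n → Ctl), W fg * G fg := by
        refine Finset.sum_le_sum fun fg _ => ?_
        split_ifs with h
        · exact le_mul_of_one_le_right (hWpos fg) (hG1 fg h)
        · exact mul_nonneg (hWpos fg) (hGnn fg)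
    _ = ∑ y : Obs, ∑ fg : (Fin n → Obs) × (Fin n → Ctl),
          (W fg * Real.exp (η * Sy y fg + -(η * η * n))
            + W fg * Real.exp (-η * Sy y fg + -(η * η * n))) := by
        rw [Finset.sum_comm]
        refine Finset.sum_congr rfl fun fg _ => ?_
        rw [hGdef]
        simp only
        rw [Finset.mul_sum]
        exact Finset.sum_congr rfl fun y _ => by ring
    _ ≤ ∑ y : Obs, 2 * Real.exp (-(η * η * n)) * Real.cosh η ^ n := by
        refine Finset.sum_le_sum fun y _ => ?_
        rw [Finset.sum_add_distrib]
        have e1 : ∑ fg : (Fin n → Obs) × (Fin n → Ctl),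
            W fg * Real.exp (η * Sy y fg + -(η * η * n))
            = Real.exp (-(η * η * n)) * ∑ fg, W fg * Real.exp (η * Sy y fg) := by
          rw [Finset.mul_sum]
          exact Finset.sum_congr rfl fun fg _ => by rw [Real.exp_add]; ring
        have e2 : ∑ fg : (Fin n → Obs) × (Fin n → Ctl),
            W fg * Real.exp (-η * Sy y fg + -(η * η * n))
            = Real.exp (-(η * η * n)) * ∑ fg, W fg * Real.exp ((-η) * Sy y fg) := by
          rw [Finset.mul_sum]
          exact Finset.sum_congr rfl fun fg _ => by rw [Real.exp_add]; ring
        rw [e1, e2]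
        have b1 := hmgf y η
        have b2 := hmgf y (-η)
        rw [Real.cosh_neg] at b2
        have hexpnn := (Real.exp_pos (-(η * η * n))).le
        nlinarith [mul_le_mul_of_nonneg_left b1 hexpnn, mul_le_mul_of_nonneg_left b2 hexpnn]
    _ = (Fintype.card Obs : ℝ) * (2 * Real.exp (-(η * η * n)) * Real.cosh η ^ n) := by
        rw [Finset.sum_const, Finset.card_univ, nsmul_eq_mul]
    _ ≤ (2 * (Fintype.card Obs : ℝ)) * Real.exp (-(η ^ 2 / 2 * n)) := by
        have hcard : (0:ℝ) ≤ (Fintype.card Obs : ℝ) := Nat.cast_nonneg _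
        have key : Real.exp (-(η * η * n)) * Real.cosh η ^ n ≤ Real.exp (-(η ^ 2 / 2 * n)) := by
          calc Real.exp (-(η * η * n)) * Real.cosh η ^ n
              ≤ Real.exp (-(η * η * n)) * Real.exp (η ^ 2 / 2 * n) :=
                mul_le_mul_of_nonneg_left hcoshpow (Real.exp_pos _).le
            _ = Real.exp (-(η ^ 2 / 2 * n)) := by rw [← Real.exp_add]; ring_nf
        calc (Fintype.card Obs : ℝ) * (2 * Real.exp (-(η * η * n)) * Real.cosh η ^ n)
            = (2 * (Fintype.card Obs : ℝ)) * (Real.exp (-(η * η * n)) * Real.cosh η ^ n) := by ring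
          _ ≤ (2 * (Fintype.card Obs : ℝ)) * Real.exp (-(η ^ 2 / 2 * n)) :=
              mul_le_mul_of_nonneg_left key (by positivity)


lemma inner_collapse (P : Fin M → Ctl → Obs → Obs → ℝ) (i : Fin M)
    (ys : ℕ → Obs) (us : ℕ → Ctl) (y : Obs) (k : ℕ) :
    ∑ ytil, ∑ u, (if ys (k - 1) = ytil ∧ us k = u then (1 : ℝ) else 0) * P i u ytil y
      = P i (us k) (ys (k - 1)) y := by
  simp [ite_and, ite_mul, Finset.sum_ite_eq]

lemma expr_eq (P : Fin M → Ctl → Obs → Obs → ℝ) (i : Fin M) (n : ℕ)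
    (ys : ℕ → Obs) (us : ℕ → Ctl) (y : Obs) :
    (1 / (n : ℝ)) * ∑ k ∈ Finset.Icc 1 n, (if ys k = y then (1 : ℝ) else 0)
      - ∑ ytil, ∑ u, ((1 / (n : ℝ)) * ∑ k ∈ Finset.Icc 1 n,
          (if ys (k - 1) = ytil ∧ us k = u then (1 : ℝ) else 0)) * P i u ytil y
    = (1 / (n : ℝ)) * S P i y n ys us := by
  have hsecond : ∑ ytil, ∑ u, ((1 / (n : ℝ)) * ∑ k ∈ Finset.Icc 1 n,
        (if ys (k - 1) = ytil ∧ us k = u then (1 : ℝ) else 0)) * P i u ytil y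
      = (1 / (n : ℝ)) * ∑ k ∈ Finset.Icc 1 n, P i (us k) (ys (k - 1)) y := by
    calc ∑ ytil, ∑ u, ((1 / (n : ℝ)) * ∑ k ∈ Finset.Icc 1 n,
          (if ys (k - 1) = ytil ∧ us k = u then (1 : ℝ) else 0)) * P i u ytil y
        = ∑ ytil, ∑ u, ∑ k ∈ Finset.Icc 1 n,
            (1 / (n : ℝ)) * ((if ys (k - 1) = ytil ∧ us k = u then (1 : ℝ) else 0)
              * P i u ytil y) := by
          refine Finset.sum_congr rfl fun ytil _ => Finset.sum_congr rfl fun u _ => ?_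
          rw [Finset.mul_sum, Finset.sum_mul]
          exact Finset.sum_congr rfl fun k _ => by ring
      _ = ∑ k ∈ Finset.Icc 1 n, ∑ ytil, ∑ u,
            (1 / (n : ℝ)) * ((if ys (k - 1) = ytil ∧ us k = u then (1 : ℝ) else 0)
              * P i u ytil y) := by
          exact (Finset.sum_congr rfl fun ytil _ => Finset.sum_comm).trans Finset.sum_comm
      _ = ∑ k ∈ Finset.Icc 1 n, (1 / (n : ℝ)) * ∑ ytil, ∑ u,
            (if ys (k - 1) = ytil ∧ us k = u then (1 : ℝ) else 0) * P i u ytil y := by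
          refine Finset.sum_congr rfl fun k _ => ?_
          rw [Finset.mul_sum]
          exact Finset.sum_congr rfl fun ytil _ => (Finset.mul_sum _ _ _).symm
      _ = (1 / (n : ℝ)) * ∑ k ∈ Finset.Icc 1 n, P i (us k) (ys (k - 1)) y := by
          rw [Finset.mul_sum]
          exact Finset.sum_congr rfl fun k _ => by rw [inner_collapse]
  rw [hsecond]
  unfold S
  rw [Finset.sum_sub_distrib, mul_sub]

end Stmt18Aux

set_option linter.unusedSectionVars true

/-- **Uniform exponential concentration of the empirical observation
distribution around the one induced by the joint empirical distribution of
(previous observation, control)**: in the controlled Markovian observation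
model (no positivity of the kernels needed), for every `η > 0` there are
constants `C > 0` and `b > 0`, depending only on the kernels and `η` (not on
the control policy), such that for every hypothesis `i`, every causal control
policy, every realization of the model, and every `n ≥ 1`,
`ℙ_i{ ∃ y, |(1/n) Σ_{k=1}^n 1{Y_k = y}
            − Σ_{ỹ,u} T_n(ỹ,u) p_i^u(y|ỹ)| > η } ≤ C e^{-b n}`,
where `T_n(ỹ,u) = (1/n) Σ_{k=1}^n 1{Y_{k-1} = ỹ, U_k = u}`. -/
theorem stmt_18 {Obs Ctl : Type*} [Fintype Obs] [Fintype Ctl]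
    [DecidableEq Obs] [DecidableEq Ctl]
    [MeasurableSpace Obs] [MeasurableSingletonClass Obs]
    [MeasurableSpace Ctl] [MeasurableSingletonClass Ctl]
    {M : ℕ} (hM : 2 ≤ M)
    (P : Fin M → Ctl → Obs → Obs → ℝ)
    (hP_nonneg : ∀ i u ytil y, 0 ≤ P i u ytil y)
    (hP_sum : ∀ i u ytil, ∑ y, P i u ytil y = 1)
    (y0 : Obs)
    (η : ℝ) (hη : 0 < η) :
    ∃ C > (0 : ℝ), ∃ b > (0 : ℝ),
      ∀ i : Fin M,
      ∀ (q : ℕ → (ℕ → Obs) → (ℕ → Ctl) → Ctl → ℝ), IsPolicy q →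
      ∀ (Ω : Type*) (_ : MeasurableSpace Ω)
        (ℙ : Fin M → Measure Ω), (∀ j, IsProbabilityMeasure (ℙ j)) →
      ∀ (Y : ℕ → Ω → Obs) (U : ℕ → Ω → Ctl), IsModel P y0 q ℙ Y U →
      ∀ n : ℕ, 1 ≤ n →
      ℙ i {ω | ∃ y : Obs,
          η < |(1 / (n : ℝ)) *
                ∑ k ∈ Finset.Icc 1 n, (if Y k ω = y then (1 : ℝ) else 0)
              - ∑ ytil, ∑ u,
                  ((1 / (n : ℝ)) *
                    ∑ k ∈ Finset.Icc 1 n,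
                      (if Y (k - 1) ω = ytil ∧ U k ω = u then (1 : ℝ) else 0))
                  * P i u ytil y|}
        ≤ ENNReal.ofReal (C * Real.exp (-(b * n))) := by
  classical
  refine ⟨2 * (Fintype.card Obs : ℝ) + 1, by positivity, η ^ 2 / 2, by positivity, ?_⟩
  intro i q hq Ω mΩ ℙ hprob Y U hmodel n hn
  have hΩ : Nonempty Ω := by
    by_contra h
    have h1 : (ℙ i) Set.univ = 1 := (hprob i).measure_univ
    rw [Set.univ_eq_empty_iff.mpr (not_nonempty_iff.mp h), measure_empty] at h1
    exact zero_ne_one h1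
  obtain ⟨ω0⟩ := hΩ
  set u0 : Ctl := U 1 ω0 with hu0
  have hn' : (0 : ℝ) < (n : ℝ) := by exact_mod_cast hn
  set Bad : Finset ((Fin n → Obs) × (Fin n → Ctl)) :=
    Finset.univ.filter (fun fg => ∃ y : Obs,
      η * n < |Stmt18Aux.S P i y n (Stmt18Aux.ext y0 n fg.1) (Stmt18Aux.ext u0 n fg.2)|)
    with hBad
  set Cyl : ((Fin n → Obs) × (Fin n → Ctl)) → Set Ω := fun fg =>
    {ω | ∀ k, 1 ≤ k → k ≤ n →
      Y k ω = Stmt18Aux.ext y0 n fg.1 k ∧ U k ω = Stmt18Aux.ext u0 n fg.2 k} with hCyl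
  have hsub : {ω : Ω | ∃ y : Obs,
      η < |(1 / (n : ℝ)) *
            ∑ k ∈ Finset.Icc 1 n, (if Y k ω = y then (1 : ℝ) else 0)
          - ∑ ytil, ∑ u,
              ((1 / (n : ℝ)) *
                ∑ k ∈ Finset.Icc 1 n,
                  (if Y (k - 1) ω = ytil ∧ U k ω = u then (1 : ℝ) else 0))
              * P i u ytil y|} ⊆ ⋃ fg ∈ Bad, Cyl fg := by
    intro ω hω
    obtain ⟨y, hy⟩ := hω
    set f : Fin n → Obs := fun j => Y (j.1 + 1) ω with hf
    set g : Fin n → Ctl := fun j => U (j.1 + 1) ω with hg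
    have hYk : ∀ k, k ≤ n → Y k ω = Stmt18Aux.ext y0 n f k := by
      intro k hk
      by_cases h : 1 ≤ k
      · unfold Stmt18Aux.ext
        rw [dif_pos ⟨h, hk⟩]
        show Y k ω = Y (k - 1 + 1) ω
        congr 1
        omega
      · have hk0 : k = 0 := by omega
        subst hk0
        unfold Stmt18Aux.ext
        rw [dif_neg (by omega)]
        exact hmodel.2.2.1 ω
    have hUk : ∀ k, 1 ≤ k → k ≤ n → U k ω = Stmt18Aux.ext u0 n g k := by
      intro k h1 h2
      unfold Stmt18Aux.ext
      rw [dif_pos ⟨h1, h2⟩]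
      show U k ω = U (k - 1 + 1) ω
      congr 1
      omega
    have e1 : ∑ k ∈ Finset.Icc 1 n, (if Y k ω = y then (1 : ℝ) else 0)
        = ∑ k ∈ Finset.Icc 1 n, (if Stmt18Aux.ext y0 n f k = y then (1 : ℝ) else 0) :=
      Finset.sum_congr rfl fun k hk => by
        rw [hYk k (Finset.mem_Icc.mp hk).2]
    have e2 : ∀ (ytil : Obs) (u : Ctl),
        ∑ k ∈ Finset.Icc 1 n, (if Y (k - 1) ω = ytil ∧ U k ω = u then (1 : ℝ) else 0)
        = ∑ k ∈ Finset.Icc 1 n,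
            (if Stmt18Aux.ext y0 n f (k - 1) = ytil ∧ Stmt18Aux.ext u0 n g k = u
              then (1 : ℝ) else 0) := by
      intro ytil u
      refine Finset.sum_congr rfl fun k hk => ?_
      obtain ⟨h1, h2⟩ := Finset.mem_Icc.mp hk
      rw [hYk (k - 1) (by omega), hUk k h1 h2]
    rw [e1] at hy
    simp only [e2] at hy
    rw [Stmt18Aux.expr_eq P i n (Stmt18Aux.ext y0 n f) (Stmt18Aux.ext u0 n g) y] at hy
    have habs : |(1 / (n : ℝ)) *
        Stmt18Aux.S P i y n (Stmt18Aux.ext y0 n f) (Stmt18Aux.ext u0 n g)|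
        = |Stmt18Aux.S P i y n (Stmt18Aux.ext y0 n f) (Stmt18Aux.ext u0 n g)| / n := by
      rw [abs_mul, abs_of_pos (show (0:ℝ) < 1 / (n : ℝ) by positivity)]
      ring
    rw [habs] at hy
    have hbadmem : (⟨f, g⟩ : (Fin n → Obs) × (Fin n → Ctl)) ∈ Bad := by
      rw [hBad, Finset.mem_filter]
      exact ⟨Finset.mem_univ _, ⟨y, (lt_div_iff₀ hn').mp hy⟩⟩
    refine Set.mem_biUnion hbadmem ?_
    intro k h1 h2
    exact ⟨hYk k h2, hUk k h1 h2⟩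
  calc ℙ i _ ≤ ℙ i (⋃ fg ∈ Bad, Cyl fg) := measure_mono hsub
    _ ≤ ∑ fg ∈ Bad, ℙ i (Cyl fg) := measure_biUnion_finset_le _ _
    _ = ∑ fg ∈ Bad, ENNReal.ofReal
          (jointP P q i n (Stmt18Aux.ext y0 n fg.1) (Stmt18Aux.ext u0 n fg.2)) :=
        Finset.sum_congr rfl fun fg _ =>
          hmodel.2.2.2 i n _ _ (Stmt18Aux.ext_zero _ _ _)
    _ = ENNReal.ofReal (∑ fg ∈ Bad,
          jointP P q i n (Stmt18Aux.ext y0 n fg.1) (Stmt18Aux.ext u0 n fg.2)) :=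
        (ENNReal.ofReal_sum_of_nonneg fun fg _ =>
          Stmt18Aux.jointP_nonneg P hP_nonneg q hq i n _ _).symm
    _ ≤ ENNReal.ofReal ((2 * (Fintype.card Obs : ℝ) + 1)
          * Real.exp (-(η ^ 2 / 2 * n))) := by
        refine ENNReal.ofReal_le_ofReal ?_
        have h1 : ∑ fg ∈ Bad,
            jointP P q i n (Stmt18Aux.ext y0 n fg.1) (Stmt18Aux.ext u0 n fg.2)
            = ∑ fg : (Fin n → Obs) × (Fin n → Ctl),
              (if ∃ y : Obs, η * n <
                  |Stmt18Aux.S P i y n (Stmt18Aux.ext y0 n fg.1) (Stmt18Aux.ext u0 n fg.2)|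
                then jointP P q i n (Stmt18Aux.ext y0 n fg.1) (Stmt18Aux.ext u0 n fg.2)
                else 0) := by
          rw [hBad, Finset.sum_filter]
        rw [h1]
        refine le_trans (Stmt18Aux.sum_bad_le P hP_nonneg hP_sum q hq i y0 u0 η hη n) ?_
        have := (Real.exp_pos (-(η ^ 2 / 2 * n))).le
        nlinarith
end
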